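/- arXiv:1305.1541 — 6 statements merged into one kernel-verified Lean document; each statement's English description precedes it below -/
import Mathlib

section
/- Let p be a prime, let A and B be cyclic groups of order p, and let N = A ∗ B be their free product. Then the kernel Γ of the canonical surjection N → A × B equals the commutator subgroup of N, and Γ is a free group of rank (p−1)^2; more precisely, Γ is freely generated by the commutators [a,b] = a b a^{−1} b^{−1} for a ∈ A∖{1} and b ∈ B∖{1}. -/
/-!
Let `F` be the free group on pairs `(a, b)` of nontrivial elements and `ι : F → A ∗ B` send
`(a, b)` to `⁅a, b⁆`. The free product acts on `A × B × F` so that `(a, b, w) ↦ a * b * ι w` is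
equivariant for left multiplication; the action of `B` is forced by the relation
`b * a = a * b * ⁅a⁻¹, b⁻¹⁆⁻¹`. Acting on `(1, 1, 1)` writes every element as `a * b * ι w`, so the
kernel of `A ∗ B → A × B` is the range of `ι`; acting on `(1, 1, w)` shows that `ι u` sends it to
`(1, 1, u * w)`, so `ι` is injective. The range of `ι` lies in the commutator subgroup, and the
commutator subgroup lies in the kernel as soon as `A` and `B` are abelian.
-/

open scoped commutatorElement

theorem Nat.card_subtype_ne {α : Type*} (a : α) : Nat.card {x // x ≠ a} = Nat.card α - 1 := by
  change Nat.card ({a}ᶜ : Set α) = _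
  rw [Nat.card_coe_set_eq, Set.compl_eq_univ_sdiff,
    Set.ncard_sdiff_singleton_of_mem (Set.mem_univ a), Set.ncard_univ]

namespace Monoid.Coprod

variable {A B : Type*} [Group A] [Group B]

abbrev NontrivialPairs (A B : Type*) [Group A] [Group B] : Type _ :=
  {a : A // a ≠ 1} × {b : B // b ≠ 1}

noncomputable def commutatorsLift : FreeGroup (NontrivialPairs A B) →* A ∗ B :=
  FreeGroup.lift fun s => ⁅(inl s.1.1 : A ∗ B), inr s.2.1⁆

@[simp]
theorem commutatorsLift_of (s : NontrivialPairs A B) :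
    commutatorsLift (FreeGroup.of s) = ⁅(inl s.1.1 : A ∗ B), inr s.2.1⁆ :=
  FreeGroup.lift_apply_of

theorem toProd_comp_commutatorsLift :
    (toProd : A ∗ B →* A × B).comp commutatorsLift = 1 := by
  ext s <;> simp [commutatorElement_def]

theorem range_commutatorsLift_le_commutator :
    (commutatorsLift : FreeGroup (NontrivialPairs A B) →* A ∗ B).range ≤ commutator (A ∗ B) := by
  rw [commutatorsLift, FreeGroup.range_lift_eq_closure, Subgroup.closure_le]
  rintro _ ⟨s, rfl⟩
  exact Subgroup.commutator_mem_commutator (Subgroup.mem_top _) (Subgroup.mem_top _)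

open scoped Classical in
noncomputable def swapLetter (a : A) (b : B) : FreeGroup (NontrivialPairs A B) :=
  if h : a ≠ 1 ∧ b ≠ 1 then FreeGroup.of (⟨a⁻¹, inv_ne_one.2 h.1⟩, ⟨b⁻¹, inv_ne_one.2 h.2⟩) else 1

@[simp]
theorem swapLetter_one_left (b : B) : swapLetter (1 : A) b = 1 := dif_neg (by simp)

@[simp]
theorem swapLetter_one_right (a : A) : swapLetter a (1 : B) = 1 := dif_neg (by simp)

@[simp]
theorem swapLetter_inv_inv (s : NontrivialPairs A B) :
    swapLetter (s.1.1⁻¹ : A) (s.2.1⁻¹ : B) = FreeGroup.of s := by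
  simp [swapLetter, s.1.2, s.2.2]

theorem inr_mul_inl_mul_commutatorsLift_swapLetter (a : A) (b : B) :
    inr b * inl a * commutatorsLift (swapLetter a b) = (inl a * inr b : A ∗ B) := by
  by_cases h : a ≠ 1 ∧ b ≠ 1
  · rw [swapLetter, dif_pos h, commutatorsLift_of]
    simp only [commutatorElement_def, map_inv]
    group
  · rcases not_and_or.mp h with ha | hb
    · simp [not_not.mp ha]
    · simp [not_not.mp hb]

def inlPerm : A →* Equiv.Perm (A × B × FreeGroup (NontrivialPairs A B)) where
  toFun a := (Equiv.mulLeft a).prodCongr (Equiv.refl _)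
  map_one' := by ext <;> simp
  map_mul' _ _ := by ext <;> simp [mul_assoc]

noncomputable def inrPerm : B →* Equiv.Perm (A × B × FreeGroup (NontrivialPairs A B)) where
  toFun b :=
    { toFun x := (x.1, b * x.2.1, (swapLetter x.1 (b * x.2.1))⁻¹ * swapLetter x.1 x.2.1 * x.2.2)
      invFun x :=
        (x.1, b⁻¹ * x.2.1, (swapLetter x.1 (b⁻¹ * x.2.1))⁻¹ * swapLetter x.1 x.2.1 * x.2.2)
      left_inv x := by simp [mul_assoc]
      right_inv x := by simp [mul_assoc] }
  map_one' := by ext <;> simp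
  map_mul' _ _ := by ext <;> simp [mul_assoc]

noncomputable def normalFormAction :
    A ∗ B →* Equiv.Perm (A × B × FreeGroup (NontrivialPairs A B)) :=
  lift inlPerm inrPerm

@[simp]
theorem normalFormAction_inl (a : A) (x : A × B × FreeGroup (NontrivialPairs A B)) :
    normalFormAction (inl a) x = (a * x.1, x.2) :=
  rfl

@[simp]
theorem normalFormAction_inr (b : B) (x : A × B × FreeGroup (NontrivialPairs A B)) :
    normalFormAction (inr b) x =
      (x.1, b * x.2.1, (swapLetter x.1 (b * x.2.1))⁻¹ * swapLetter x.1 x.2.1 * x.2.2) :=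
  rfl

noncomputable def normalForm (x : A × B × FreeGroup (NontrivialPairs A B)) : A ∗ B :=
  inl x.1 * inr x.2.1 * commutatorsLift x.2.2

theorem normalForm_normalFormAction (n : A ∗ B) (x : A × B × FreeGroup (NontrivialPairs A B)) :
    normalForm (normalFormAction n x) = n * normalForm x := by
  induction n using induction_on generalizing x with
  | inl a => simp [normalForm, mul_assoc]
  | inr b =>
    have h₁ := inr_mul_inl_mul_commutatorsLift_swapLetter x.1 x.2.1
    have h₂ := inr_mul_inl_mul_commutatorsLift_swapLetter x.1 (b * x.2.1)
    rw [normalForm, normalForm, normalFormAction_inr, ← h₁, ← h₂]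
    simp only [map_mul, map_inv]
    group
  | mul m n hm hn => rw [map_mul, Equiv.Perm.mul_apply, hm, hn, mul_assoc]

theorem normalFormAction_commutatorsLift (u w : FreeGroup (NontrivialPairs A B)) :
    normalFormAction (commutatorsLift u) (1, 1, w) = (1, 1, u * w) := by
  induction u using FreeGroup.induction_on generalizing w with
  | C1 => simp
  | of s =>
    rw [commutatorsLift_of, commutatorElement_def, ← map_inv, ← map_inv]
    simp only [map_mul, Equiv.Perm.mul_apply, normalFormAction_inl, normalFormAction_inr]
    simp
  | inv_of s hs =>
    rw [map_inv, map_inv, Equiv.Perm.inv_eq_iff_eq, hs, mul_inv_cancel_left]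
  | mul u v hu hv => simp only [map_mul, Equiv.Perm.mul_apply, hv, hu, mul_assoc]

theorem commutatorsLift_injective :
    Function.Injective (commutatorsLift : FreeGroup (NontrivialPairs A B) →* A ∗ B) := by
  intro u v huv
  have h := normalFormAction_commutatorsLift u 1
  rw [huv, normalFormAction_commutatorsLift] at h
  simpa using h.symm

theorem exists_eq_inl_mul_inr_mul_commutatorsLift (n : A ∗ B) :
    ∃ a b w, n = inl a * inr b * commutatorsLift w := by
  have h := normalForm_normalFormAction n (1, 1, 1)
  simp only [normalForm, map_one, mul_one] at h
  exact ⟨_, _, _, h.symm⟩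

theorem ker_toProd_eq_range_commutatorsLift :
    (toProd : A ∗ B →* A × B).ker = commutatorsLift.range := by
  refine le_antisymm (fun n hn => ?_)
    ((MonoidHom.range_le_ker_iff _ _).2 toProd_comp_commutatorsLift)
  obtain ⟨a, b, w, rfl⟩ := exists_eq_inl_mul_inr_mul_commutatorsLift n
  have hw : toProd (commutatorsLift w) = 1 := DFunLike.congr_fun toProd_comp_commutatorsLift w
  simp only [MonoidHom.mem_ker, map_mul, hw, toProd_apply_inl, toProd_apply_inr, Prod.mk_mul_mk,
    mul_one, one_mul, Prod.mk_eq_one] at hn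
  rw [hn.1, hn.2, map_one, map_one, one_mul, one_mul]
  exact ⟨w, rfl⟩

noncomputable def freeGroupEquivKerToProd :
    FreeGroup (NontrivialPairs A B) ≃* (toProd : A ∗ B →* A × B).ker :=
  (MonoidHom.ofInjective commutatorsLift_injective).trans
    (MulEquiv.subgroupCongr ker_toProd_eq_range_commutatorsLift.symm)

theorem ker_toProd_eq_commutator [IsMulCommutative A] [IsMulCommutative B] :
    (toProd : A ∗ B →* A × B).ker = commutator (A ∗ B) := by
  refine le_antisymm
    (ker_toProd_eq_range_commutatorsLift.trans_le range_commutatorsLift_le_commutator) ?_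
  rw [commutator_def, Subgroup.commutator_le]
  intro g _ h _
  rw [MonoidHom.mem_ker, map_commutatorElement, commutatorElement_eq_one_iff_mul_comm]
  exact Prod.ext (mul_comm' _ _) (mul_comm' _ _)

end Monoid.Coprod

open Monoid.Coprod in
theorem subrao_commutator_free_general
    (p : ℕ)
    (A B : Type) [Group A] [Group B] [IsCyclic A] [IsCyclic B]
    (hA : Nat.card A = p) (hB : Nat.card B = p) :
    (Monoid.Coprod.lift ((MonoidHom.inl A B)) ((MonoidHom.inr A B))).ker
        = commutator (Monoid.Coprod A B) ∧
    Nat.card ({a : A // a ≠ 1} × {b : B // b ≠ 1}) = (p - 1) ^ 2 ∧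
    ∃ e : FreeGroup ({a : A // a ≠ 1} × {b : B // b ≠ 1}) ≃*
        (commutator (Monoid.Coprod A B)),
      ∀ x : {a : A // a ≠ 1} × {b : B // b ≠ 1},
        (e (FreeGroup.of x) : Monoid.Coprod A B) =
          ⁅(Monoid.Coprod.inl x.1.1 : Monoid.Coprod A B), (Monoid.Coprod.inr x.2.1 : Monoid.Coprod A B)⁆ := by
  have hker : (toProd : A ∗ B →* A × B).ker = commutator (A ∗ B) := ker_toProd_eq_commutator
  refine ⟨hker, ?_, freeGroupEquivKerToProd.trans (MulEquiv.subgroupCongr hker), commutatorsLift_of⟩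
  rw [Nat.card_prod, Nat.card_subtype_ne, Nat.card_subtype_ne, hA, hB, sq]

/-- Let `p` be a prime, `A` and `B` cyclic groups of order `p`, and
`N = A ∗ B` their free product.  Then the kernel `Γ` of the canonical surjection
`N → A × B` equals the commutator subgroup of `N`, and `Γ` is a free group of rank
`(p-1)^2`, freely generated by the commutators `⁅a, b⁆` for `a ∈ A \ {1}`, `b ∈ B \ {1}`. -/
theorem subrao_commutator_free
    (p : ℕ) (hp : p.Prime)
    (A B : Type) [Group A] [Group B] [IsCyclic A] [IsCyclic B]
    (hA : Nat.card A = p) (hB : Nat.card B = p) :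
    (Monoid.Coprod.lift ((MonoidHom.inl A B)) ((MonoidHom.inr A B))).ker
        = commutator (Monoid.Coprod A B) ∧
    Nat.card ({a : A // a ≠ 1} × {b : B // b ≠ 1}) = (p - 1) ^ 2 ∧
    ∃ e : FreeGroup ({a : A // a ≠ 1} × {b : B // b ≠ 1}) ≃*
        (commutator (Monoid.Coprod A B)),
      ∀ x : {a : A // a ≠ 1} × {b : B // b ≠ 1},
        (e (FreeGroup.of x) : Monoid.Coprod A B) =
          ⁅(Monoid.Coprod.inl x.1.1 : Monoid.Coprod A B), (Monoid.Coprod.inr x.2.1 : Monoid.Coprod A B)⁆ :=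
  subrao_commutator_free_general p A B hA hB
end

section
/- Let p be a prime, K a field of characteristic p, and G a finite cyclic p-group. Let V be a finite-dimensional K[G]-module and suppose V = V_1 ⊕ ⋯ ⊕ V_m is a direct sum decomposition into nonzero indecomposable K[G]-submodules. Then m = dim_K V^G, where V^G denotes the subspace of G-invariant vectors of V. -/
/-!
Let `g` generate `G` and put `T = ρ g - 1`. As `g ^ p ^ k = 1` in characteristic `p`,
`T ^ p ^ k = ρ g ^ p ^ k - 1 = 0`; moreover `V^G = ker T`, and a subspace is `G`-stable iff it is
`T`-stable. So each `W i`, viewed as a `K[X]`-module with `X` acting as `T`, is an indecomposable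
`X`-primary torsion module. By the structure theorem over the PID `K[X]` it is isomorphic to
`K[X] ⧸ (X ^ k)` with `k ≥ 1`, where the kernel of `X` is the line spanned by `X ^ (k - 1)`.
Since `T` preserves the decomposition, `ker T` is the direct sum of these lines.
-/

open Module DirectSum Polynomial

/-- `IsIndecomposable (Submodule R M)` says that the module `M` is indecomposable, and
`IsIndecomposable f.invtSubmodule` that `M` has no nontrivial splitting into `f`-stable parts. -/
structure IsIndecomposable (α : Type*) [Lattice α] [BoundedOrder α] : Prop where
  bot_ne_top : (⊥ : α) ≠ ⊤
  eq_bot_or_eq_bot_of_isCompl : ∀ {a b : α}, IsCompl a b → a = ⊥ ∨ b = ⊥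

theorem OrderIso.isIndecomposable {α β : Type*} [Lattice α] [BoundedOrder α] [Lattice β]
    [BoundedOrder β] (e : α ≃o β) (h : IsIndecomposable α) : IsIndecomposable β where
  bot_ne_top := by simpa only [e.map_bot, e.map_top] using e.injective.ne h.bot_ne_top
  eq_bot_or_eq_bot_of_isCompl {a b} hab := by
    simpa only [map_eq_bot_iff] using h.eq_bot_or_eq_bot_of_isCompl (e.symm.isCompl hab)

theorem IsIndecomposable.nontrivial {R M : Type*} [Semiring R] [AddCommMonoid M] [Module R M]
    (hM : IsIndecomposable (Submodule R M)) : Nontrivial M :=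
  (Submodule.nontrivial_iff R).mp ⟨_, _, hM.bot_ne_top⟩

theorem IsIndecomposable.eq_zero_or_eq_one_of_isIdempotentElem {R M : Type*} [Ring R]
    [AddCommGroup M] [Module R M] (hM : IsIndecomposable (Submodule R M)) {f : Module.End R M}
    (hf : IsIdempotentElem f) : f = 0 ∨ f = 1 := by
  refine (hM.eq_bot_or_eq_bot_of_isCompl (LinearMap.IsIdempotentElem.isCompl hf)).imp
    LinearMap.range_eq_bot.mp fun h ↦ ?_
  ext x
  exact LinearMap.ker_eq_bot.mp h (by simpa using LinearMap.congr_fun hf.eq x)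

theorem DirectSum.exists_linearEquiv_of_isIndecomposable {R ι : Type*} [Ring R] [DecidableEq ι]
    {Q : ι → Type*} [∀ i, AddCommGroup (Q i)] [∀ i, Module R (Q i)]
    (h : IsIndecomposable (Submodule R (⨁ i, Q i))) : ∃ j, Nonempty ((⨁ i, Q i) ≃ₗ[R] Q j) := by
  have := h.nontrivial
  obtain ⟨x, hx⟩ := exists_ne (0 : ⨁ i, Q i)
  obtain ⟨j, hj⟩ : ∃ j, x j ≠ 0 := by
    by_contra! h0
    exact hx (DirectSum.ext fun i ↦ h0 i)
  have h_retract : component R ι Q j ∘ₗ lof R ι Q j = LinearMap.id := by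
    ext y
    exact component.lof_self R j y
  have h_idem : IsIdempotentElem (lof R ι Q j ∘ₗ component R ι Q j) := by
    refine LinearMap.ext fun y ↦ ?_
    simp only [Module.End.mul_apply, LinearMap.comp_apply, component.lof_self]
  refine ⟨j, ⟨.ofLinearMap _ _ h_retract
    ((h.eq_zero_or_eq_one_of_isIdempotentElem h_idem).resolve_left fun h0 ↦ hj ?_)⟩⟩
  simpa [← apply_eq_component] using congr(component R ι Q j ($h0 x))

theorem Module.End.isIndecomposable_invtSubmodule_restrict {R M : Type*} [Semiring R]
    [AddCommMonoid M] [Module R M] {f : Module.End R M} {p : Submodule R M}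
    (hp : ∀ x ∈ p, f x ∈ p) (hp_ne : p ≠ ⊥)
    (h : ∀ A B : Submodule R M, A ≤ p → B ≤ p → A ∈ f.invtSubmodule → B ∈ f.invtSubmodule →
      A ⊓ B = ⊥ → A ⊔ B = p → A = ⊥ ∨ B = ⊥) :
    IsIndecomposable (invtSubmodule (f.restrict hp)) where
  bot_ne_top h_eq := by
    have := Submodule.nontrivial_iff_ne_bot.mpr hp_ne
    exact bot_ne_top (congrArg Subtype.val h_eq)
  eq_bot_or_eq_bot_of_isCompl {a b} hab := by
    obtain ⟨a, ha⟩ := a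
    obtain ⟨b, hb⟩ := b
    rw [invtSubmodule.isCompl_mk_iff] at hab
    rw [invtSubmodule.mk_eq_bot_iff, invtSubmodule.mk_eq_bot_iff]
    have h_inj := p.injective_subtype
    simpa only [(Submodule.map_injective_of_injective h_inj).eq_iff' (Submodule.map_bot _)] using
      h _ _ (Submodule.map_subtype_le _ _) (Submodule.map_subtype_le _ _)
        (invtSubmodule.map_subtype_mem_of_mem_invtSubmodule f hp ha)
        (invtSubmodule.map_subtype_mem_of_mem_invtSubmodule f hp hb)
        (by rw [← Submodule.map_inf _ h_inj, hab.inf_eq_bot, Submodule.map_bot])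
        (by rw [← Submodule.map_sup, hab.sup_eq_top, Submodule.map_top, Submodule.range_subtype])

theorem LinearEquiv.finrank_ker_eq_of_comp_eq {R M N : Type*} [Semiring R] [AddCommMonoid M]
    [Module R M] [AddCommMonoid N] [Module R N] (e : M ≃ₗ[R] N) {f : Module.End R M}
    {g : Module.End R N} (h : g ∘ₗ e.toLinearMap = e.toLinearMap ∘ₗ f) :
    finrank R (LinearMap.ker g) = finrank R (LinearMap.ker f) := by
  have h_ker := LinearMap.ker_comp e.toLinearMap g
  rw [h, LinearMap.ker_comp, LinearEquiv.ker, Submodule.comap_bot,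
    Submodule.comap_equiv_eq_map_symm] at h_ker
  rw [h_ker, LinearEquiv.finrank_map_eq]

theorem DirectSum.finrank_ker_lmap {ι K : Type*} [Fintype ι] [DivisionRing K]
    {M N : ι → Type*} [∀ i, AddCommGroup (M i)] [∀ i, Module K (M i)]
    [∀ i, FiniteDimensional K (M i)] [∀ i, AddCommGroup (N i)] [∀ i, Module K (N i)]
    (f : ∀ i, M i →ₗ[K] N i) :
    finrank K (LinearMap.ker (lmap f)) = ∑ i, finrank K (LinearMap.ker (f i)) := by
  have h_range : LinearMap.range (lmap fun i ↦ (LinearMap.ker (f i)).subtype) =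
      LinearMap.ker (lmap f) := by
    rw [range_lmap, ker_lmap]
    simp only [Submodule.range_subtype]
  rw [← h_range, LinearMap.finrank_range_of_inj ((lmap_injective _).mpr fun i ↦
    Subtype.val_injective), finrank_directSum]

theorem DirectSum.IsInternal.finrank_ker_eq_sum {ι K V : Type*} [Fintype ι] [DecidableEq ι]
    [DivisionRing K] [AddCommGroup V] [Module K V] [FiniteDimensional K V]
    {W : ι → Submodule K V} (hW : IsInternal W) (T : Module.End K V)
    (hT : ∀ i, ∀ x ∈ W i, T x ∈ W i) :
    finrank K (LinearMap.ker T) = ∑ i, finrank K (LinearMap.ker (T.restrict (hT i))) := by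
  let e : (⨁ i, W i) ≃ₗ[K] V := LinearEquiv.ofBijective (coeLinearMap W) hW
  have h_conj : T ∘ₗ e.toLinearMap = e.toLinearMap ∘ₗ lmap fun i ↦ T.restrict (hT i) := by
    ext i x
    simp only [LinearMap.comp_apply, lmap_lof]
    change T (coeLinearMap W (lof K ι _ i x)) = coeLinearMap W (lof K ι _ i (T.restrict (hT i) x))
    rw [coeLinearMap_lof, coeLinearMap_lof, LinearMap.coe_restrict_apply]
  rw [e.finrank_ker_eq_of_comp_eq h_conj, finrank_ker_lmap]

theorem Submodule.restrictScalars_span_singleton_of_X_smul_eq_zero {K M : Type*} [CommRing K]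
    [AddCommGroup M] [Module K[X] M] [Module K M] [IsScalarTower K K[X] M] {v : M}
    (hv : (X : K[X]) • v = 0) : (K[X] ∙ v).restrictScalars K = K ∙ v := by
  ext w
  simp only [Submodule.restrictScalars_mem, Submodule.mem_span_singleton]
  constructor
  · rintro ⟨f, rfl⟩
    obtain ⟨g, hg⟩ := X_dvd_sub_C (p := f)
    refine ⟨f.coeff 0, ?_⟩
    rw [← algebraMap_smul K[X], algebraMap_eq, eq_comm, ← sub_eq_zero, ← sub_smul, hg, mul_comm,
      mul_smul, hv, smul_zero]
  · rintro ⟨c, rfl⟩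
    exact ⟨C c, algebraMap_smul K[X] c v⟩

theorem Polynomial.finrank_ker_X_smul_quotient_span_X_pow {K : Type*} [Field K] {n : ℕ}
    (hn : n ≠ 0) : finrank K (LinearMap.ker
      (DistribSMul.toLinearMap K (K[X] ⧸ K[X] ∙ (X : K[X]) ^ n) (X : K[X]))) = 1 := by
  obtain ⟨k, rfl⟩ := Nat.exists_eq_add_one_of_ne_zero hn
  rw [pow_succ']
  have h_smul : (X : K[X]) • Ideal.Quotient.mk (K[X] ∙ (X : K[X]) * X ^ k) (X ^ k) = 0 := by
    rw [← Ideal.Quotient.mk_eq_mk, ← Submodule.Quotient.mk_smul, smul_eq_mul,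
      Submodule.Quotient.mk_eq_zero]
    exact Submodule.mem_span_singleton_self _
  have h_ne : Ideal.Quotient.mk (K[X] ∙ (X : K[X]) * X ^ k) (X ^ k) ≠ 0 := by
    rw [Ne, Ideal.Quotient.eq_zero_iff_mem, ← pow_succ', Ideal.submodule_span_eq,
      Ideal.mem_span_singleton, pow_dvd_pow_iff X_ne_zero not_isUnit_X]
    omega
  change finrank K ((Submodule.torsionBy K[X] _ X).restrictScalars K) = 1
  rw [Ideal.Quotient.torsionBy_eq_span_singleton _ _ (mem_nonZeroDivisors_of_ne_zero X_ne_zero),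
    Submodule.restrictScalars_span_singleton_of_X_smul_eq_zero h_smul, finrank_span_singleton h_ne]

theorem Module.End.finrank_ker_eq_one_of_isNilpotent {K U : Type*} [Field K] [AddCommGroup U]
    [Module K U] [FiniteDimensional K U] {S : Module.End K U} (hS : IsNilpotent S)
    (hind : IsIndecomposable S.invtSubmodule) : finrank K (LinearMap.ker S) = 1 := by
  obtain ⟨q, hq⟩ := hS
  have h_torsion : Module.IsTorsion' (AEval' S) (Submonoid.powers (X : K[X])) := by
    intro x
    obtain ⟨u, rfl⟩ := (AEval'.of S).surjective x
    refine ⟨⟨X ^ q, q, rfl⟩, ?_⟩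
    change (X : K[X]) ^ q • AEval'.of S u = 0
    rw [AEval'.X_pow_smul_of, hq, zero_smul, map_zero]
  obtain ⟨d, k, ⟨e⟩⟩ := Module.torsion_by_prime_power_decomposition irreducible_X h_torsion
  have hN := (AEval.mapSubmodule K U S).isIndecomposable hind
  obtain ⟨j, ⟨e'⟩⟩ := DirectSum.exists_linearEquiv_of_isIndecomposable
    ((Submodule.orderIsoMapComap e).isIndecomposable hN)
  let Φ : U ≃ₗ[K] K[X] ⧸ K[X] ∙ (X : K[X]) ^ k j :=
    (AEval'.of S).trans ((e.trans e').restrictScalars K)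
  have hΦ : DistribSMul.toLinearMap K _ (X : K[X]) ∘ₗ Φ.toLinearMap = Φ.toLinearMap ∘ₗ S := by
    ext u
    simp [Φ, ← AEval'.X_smul_of]
  have hk : k j ≠ 0 := by
    intro h0
    have : Subsingleton (K[X] ⧸ K[X] ∙ (X : K[X]) ^ k j) := by
      rw [h0, pow_zero]
      exact Ideal.Quotient.subsingleton_iff.mpr Ideal.span_singleton_one
    have := hN.nontrivial
    exact not_subsingleton _ (e.trans e').toEquiv.subsingleton
  rw [← Φ.finrank_ker_eq_of_comp_eq hΦ, finrank_ker_X_smul_quotient_span_X_pow hk]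

theorem isNilpotent_sub_one_of_pow_eq_one (R : Type*) {A : Type*} [CommRing R] [Ring A]
    [Algebra R A] (p : ℕ) [ExpChar R p] {a : A} {k : ℕ} (ha : a ^ p ^ k = 1) :
    IsNilpotent (a - 1) :=
  ⟨p ^ k, by simpa [ha] using congr(aeval a $(sub_pow_expChar_pow (X : R[X]) 1 k (p := p)))⟩

namespace Representation

theorem invariants_eq_ker_sub_one {k G V : Type*} [CommRing k] [Group G] [AddCommGroup V]
    [Module k V] (ρ : Representation k G V) {g : G} (hg : ∀ x, x ∈ Submonoid.powers g) :
    ρ.invariants = LinearMap.ker (ρ g - 1) := by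
  ext v
  simp only [mem_invariants, LinearMap.mem_ker, LinearMap.sub_apply, Module.End.one_apply,
    sub_eq_zero]
  refine ⟨fun h ↦ h g, fun h x ↦ ?_⟩
  obtain ⟨n, rfl⟩ := hg x
  rw [map_pow, Module.End.pow_apply, Function.iterate_fixed h]

theorem apply_mem_of_apply_generator_mem {k G V : Type*} [CommSemiring k] [Monoid G]
    [AddCommMonoid V] [Module k V] (ρ : Representation k G V) {g : G}
    (hg : ∀ x, x ∈ Submonoid.powers g) {A : Submodule k V} (hA : ∀ v ∈ A, ρ g v ∈ A) (x : G) : ∀ v ∈ A, ρ x v ∈ A := by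
  obtain ⟨n, rfl⟩ := hg x
  intro v hv
  rw [map_pow, Module.End.pow_apply]
  exact Set.MapsTo.iterate hA n hv

end Representation

theorem number_of_indecomposable_summands_eq_dim_invariants_general
    (p : ℕ) (hp : p.Prime)
    (K : Type) [Field K] [CharP K p]
    (G : Type) [Group G] [IsCyclic G] (hG : IsPGroup p G)
    (V : Type) [AddCommGroup V] [Module K V] [FiniteDimensional K V]
    (ρ : Representation K G V)
    (m : ℕ) (W : Fin m → Submodule K V)
    (hstable : ∀ i, ∀ g : G, ∀ v ∈ W i, ρ g v ∈ W i)
    (hne : ∀ i, W i ≠ ⊥)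
    (hindec : ∀ i, ¬ ∃ W₁ W₂ : Submodule K V,
        W₁ ≤ W i ∧ W₂ ≤ W i ∧
        (∀ g : G, ∀ v ∈ W₁, ρ g v ∈ W₁) ∧ (∀ g : G, ∀ v ∈ W₂, ρ g v ∈ W₂) ∧
        W₁ ≠ ⊥ ∧ W₂ ≠ ⊥ ∧ W₁ ⊓ W₂ = ⊥ ∧ W₁ ⊔ W₂ = W i)
    (hdirect : DirectSum.IsInternal W) :
    m = Module.finrank K ρ.invariants := by
  have : Fact p.Prime := ⟨hp⟩
  obtain ⟨g, hg⟩ := IsCyclic.exists_generator (α := G)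
  obtain ⟨k, hk⟩ := hG g
  have hg_powers : ∀ x, x ∈ Submonoid.powers g := fun x ↦
    (isOfFinOrder_iff_pow_eq_one.mpr ⟨p ^ k, pow_pos hp.pos k, hk⟩).mem_powers_iff_mem_zpowers.mpr
      (hg x)
  set T : End K V := ρ g - 1
  have hT : ∀ i, ∀ v ∈ W i, T v ∈ W i := fun i v hv ↦ sub_mem (hstable i g v hv) hv
  have hT_nil : IsNilpotent T :=
    isNilpotent_sub_one_of_pow_eq_one K p (by rw [← map_pow, hk, map_one])
  have h_stable : ∀ A ∈ T.invtSubmodule, ∀ x, ∀ v ∈ A, ρ x v ∈ A := fun A hA ↦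
    ρ.apply_mem_of_apply_generator_mem hg_powers fun v hv ↦ by
      simpa [T] using add_mem (show T v ∈ A from hA hv) hv
  have h_ker : ∀ i, finrank K (LinearMap.ker (T.restrict (hT i))) = 1 := fun i ↦
    End.finrank_ker_eq_one_of_isNilpotent (End.isNilpotent.restrict (hT i) hT_nil)
      (End.isIndecomposable_invtSubmodule_restrict (hT i) (hne i)
        fun A B hA hB hAT hBT hinf hsup ↦ by
          by_contra! h
          exact hindec i ⟨A, B, hA, hB, h_stable A hAT, h_stable B hBT, h.1, h.2, hinf, hsup⟩)
  rw [ρ.invariants_eq_ker_sub_one hg_powers, hdirect.finrank_ker_eq_sum T hT]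
  simp [h_ker]

/-- Over a field `K` of characteristic `p`, for a finite cyclic `p`-group `G`
and a finite-dimensional `K[G]`-module `V`, the number of summands in any decomposition of
`V` into nonzero indecomposable `K[G]`-submodules equals `dim_K V^G`. -/
theorem number_of_indecomposable_summands_eq_dim_invariants
    (p : ℕ) (hp : p.Prime)
    (K : Type) [Field K] [CharP K p]
    (G : Type) [Group G] [Finite G] [IsCyclic G] (hG : IsPGroup p G)
    (V : Type) [AddCommGroup V] [Module K V] [FiniteDimensional K V]
    (ρ : Representation K G V)
    (m : ℕ) (W : Fin m → Submodule K V)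
    (hstable : ∀ i, ∀ g : G, ∀ v ∈ W i, ρ g v ∈ W i)
    (hne : ∀ i, W i ≠ ⊥)
    (hindec : ∀ i, ¬ ∃ W₁ W₂ : Submodule K V,
        W₁ ≤ W i ∧ W₂ ≤ W i ∧
        (∀ g : G, ∀ v ∈ W₁, ρ g v ∈ W₁) ∧ (∀ g : G, ∀ v ∈ W₂, ρ g v ∈ W₂) ∧
        W₁ ≠ ⊥ ∧ W₂ ≠ ⊥ ∧ W₁ ⊓ W₂ = ⊥ ∧ W₁ ⊔ W₂ = W i)
    (hdirect : DirectSum.IsInternal W) :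
    m = Module.finrank K ρ.invariants :=
  number_of_indecomposable_summands_eq_dim_invariants_general p hp K G hG V ρ m W hstable hne hindec
    hdirect
end

section
/- Let p be a prime, let A = ⟨ε_A⟩ and B be cyclic groups of order p, N = A ∗ B their free product, and Γ the commutator subgroup of N. The group A acts on the abelianization Γ^{ab} = Γ/[Γ,Γ] by conjugation, making Γ^{ab} a module over the integral group ring Z[A]. Then Γ^{ab} is isomorphic as a Z[A]-module to the direct sum of p−1 copies of Z[A]/(1 + ε_A + ε_A^2 + ⋯ + ε_A^{p−1}), i.e., of p−1 copies of the integral representation of A of degree p−1 given by the companion matrix of the p-th cyclotomic polynomial. -/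
/-- Conjugation by an element of the ambient group, restricted to the commutator subgroup. -/
def conjCommutator {N : Type} [Group N] (x : N) :
    commutator N →* commutator N where
  toFun γ := ⟨x * (γ : N) * x⁻¹,
    Subgroup.Normal.conj_mem inferInstance (γ : N) γ.2 x⟩
  map_one' := by
    ext; simp
  map_mul' γ η := by
    ext; simp only [Subgroup.coe_mul, Submonoid.coe_mul]; group

/-- The automorphism of the abelianization of the commutator subgroup induced by
conjugation by `x`. -/
def conjAb {N : Type} [Group N] (x : N) :
    Abelianization (commutator N) →* Abelianization (commutator N) :=
  Abelianization.map (conjCommutator x)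

/-!
Write `[a, b]` for the class of `⁅inl a, inr b⁆` in `Γᵃᵇ`. Since `A` and `B` are abelian, `Γ` is
the normal closure of these commutators, and the identities `a' · [a, b] = [a'a, b] - [a', b]`,
`b' · [a, b] = [a, b'b] - [a, b']` show that their span is stable under conjugation, so they
generate `Γᵃᵇ`. As `[ε^k, b] = (1 + ε + ⋯ + ε^(k-1)) · [ε, b]` and `[ε^p, b] = 0`, sending the
`b`-th unit vector of `⊕_{b ≠ 1} ℤ[A]/(N)` to `[ε, b]` is a well-defined surjection of
`ℤ[A]`-modules, where `N = 1 + ε + ⋯ + ε^(p-1)`.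

Injectivity comes from the homomorphism `A ∗ B → ℤ[A × B] ⋊ (A × B)`, `a ↦ (0, a)`,
`b ↦ (b - 1, b)`. Its second coordinate is trivial on `Γ`, so its first coordinate induces an
additive map `Γᵃᵇ → ℤ[A × B]`; it is `ℤ[A]`-linear and sends `[a, b]` to `(a - 1)(b - 1)`.
Comparing coefficients along `A × {b}` turns a relation `∑ t_b [ε, b] = 0` into
`t_b (ε - 1) = 0` for every `b`, and the annihilator of `ε - 1` in `ℤ[A]` is `ℤ[A] N`.
-/

open Monoid (Coprod)
open scoped commutatorElement

namespace MonoidAlgebra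

variable {A B : Type*} [Group A] [Group B]

noncomputable abbrev normElement (ε : A) : MonoidAlgebra ℤ A :=
  ∑ i ∈ Finset.range (orderOf ε), of ℤ A (ε ^ i)

theorem coeff_normElement [Finite A] {ε : A} (hε : ∀ a, a ∈ Subgroup.zpowers ε) (a : A) :
    (normElement ε).coeff a = 1 := by
  classical
  obtain ⟨k, hk, rfl⟩ := Finset.mem_image.mp (mem_zpowers_iff_mem_range_orderOf.mp (hε a))
  rw [coeff_sum, Finset.sum_apply', Finset.sum_eq_single_of_mem k hk]
  · simp
  · intro i hi hik
    rw [of_apply, coeff_single, Finsupp.single_eq_of_ne]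
    exact fun h =>
      hik (pow_injOn_Iio_orderOf (Finset.mem_range.mp hi) (Finset.mem_range.mp hk) h.symm)

theorem mem_span_normElement_of_mul_sub_one_eq_zero [Finite A] {ε : A}
    (hε : ∀ a, a ∈ Subgroup.zpowers ε) {t : MonoidAlgebra ℤ A} (ht : t * (of ℤ A ε - 1) = 0) :
    t ∈ Ideal.span {normElement ε} := by
  have : IsCyclic A := ⟨ε, hε⟩
  have fixed : Representation.leftRegular ℤ A ε t = t := by
    have : Representation.leftRegular ℤ A ε t = of ℤ A ε * t := by
      ext a
      rw [Representation.coeff_ofMulAction, of_apply, coeff_single_mul_apply, one_mul, smul_eq_mul]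
    rw [this, (of_commute (fun a => mul_comm' ε a) t).eq, ← sub_eq_zero, ← mul_sub_one, ht]
  have coeff_eq := Representation.coeff_of_leftRegular_of_generator ε hε t fixed
  have : t = single 1 (t.coeff ε) * normElement ε := by
    ext a
    rw [coeff_single_one_mul, coeff_normElement hε, mul_one, coeff_eq]
  rw [this]
  exact Ideal.mul_mem_left _ _ (Ideal.subset_span rfl)

theorem coeff_mapDomainRingHom_inl_mul_of [DecidableEq B] (s : MonoidAlgebra ℤ A) (a : A)
    (b b' : B) :
    (mapDomainRingHom ℤ (MonoidHom.inl A B) s * of ℤ (A × B) (1, b')).coeff (a, b) =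
      if b' = b then s.coeff a else 0 := by
  rw [of_apply, coeff_mul_single_apply, mul_one, mapDomainRingHom_apply]
  split_ifs with h
  · subst h
    have := Finsupp.mapDomain_apply (f := MonoidHom.inl A B) (fun _ _ h => congrArg Prod.fst h)
      s.coeff a
    simpa using this
  · refine Finsupp.mapDomain_of_notMem_range _ _ fun ⟨a', ha'⟩ => h ?_
    simpa [eq_comm, mul_inv_eq_one] using congrArg Prod.snd ha'

theorem eq_zero_of_sum_mapDomainRingHom_inl_mul_of_sub_one {ι : Type*} [Fintype ι] {b : ι → B}
    (hb : Function.Injective b) (hb1 : ∀ i, b i ≠ 1) {s : ι → MonoidAlgebra ℤ A}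
    (hs : ∑ j, mapDomainRingHom ℤ (MonoidHom.inl A B) (s j) * (of ℤ (A × B) (1, b j) - 1) = 0)
    (i : ι) : s i = 0 := by
  classical
  ext a
  have one_eq : (1 : MonoidAlgebra ℤ (A × B)) = of ℤ (A × B) (1, 1) := (map_one _).symm
  have := congrArg (fun x => x.coeff (a, b i)) hs
  simp only [one_eq, mul_sub, Finset.sum_sub_distrib, coeff_sub, coeff_sum, Finsupp.sub_apply,
    Finset.sum_apply', coeff_mapDomainRingHom_inl_mul_of, hb.eq_iff, (hb1 i).symm] at this
  simpa using this

end MonoidAlgebra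

theorem SemidirectProduct.mul_inl_mul_inv {N G : Type*} [CommGroup N] [Group G]
    {φ : G →* MulAut N} (g : N ⋊[φ] G) (n : N) : g * inl n * g⁻¹ = inl (φ g.right n) := by
  ext <;> simp [mul_comm]

theorem commutatorElement_mem_commutator {G : Type*} [Group G] (x y : G) :
    ⁅x, y⁆ ∈ commutator G :=
  Subgroup.commutator_mem_commutator (Subgroup.mem_top x) (Subgroup.mem_top y)

section ConjRep

variable {N : Type} [Group N]

theorem conjAb_mul (x y : N) : conjAb (x * y) = (conjAb x).comp (conjAb y) := by
  refine Abelianization.hom_ext _ _ (MonoidHom.ext fun γ => congrArg Abelianization.of ?_)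
  ext
  simp only [conjCommutator, MonoidHom.coe_mk, OneHom.coe_mk]
  group

theorem conjAb_one : conjAb (1 : N) = MonoidHom.id _ := by
  refine Abelianization.hom_ext _ _ (MonoidHom.ext fun γ => congrArg Abelianization.of ?_)
  ext
  simp [conjCommutator]

variable (N) in
def conjRep : Representation ℤ N (Additive (Abelianization (commutator N))) where
  toFun x := (MonoidHom.toAdditive (conjAb x)).toIntLinearMap
  map_one' := by ext; simp [conjAb_one]
  map_mul' x y := by ext; simp [conjAb_mul]

theorem conjRep_apply (x : N) (v : Additive (Abelianization (commutator N))) :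
    conjRep N x v = Additive.ofMul (conjAb x v.toMul) := rfl

theorem conjRep_ofMul_of (x : N) (γ : commutator N) :
    conjRep N x (Additive.ofMul (Abelianization.of γ)) =
      Additive.ofMul (Abelianization.of (conjCommutator x γ)) := by
  simp [conjRep_apply, conjAb]

end ConjRep

namespace Monoid.Coprod

open MonoidAlgebra

section Generators

variable {A B : Type} [Group A] [Group B]

def inlInrCommutator (a : A) (b : B) : commutator (Coprod A B) :=
  ⟨⁅inl a, inr b⁆, commutatorElement_mem_commutator _ _⟩

def inlInrCommutatorAb (a : A) (b : B) : Additive (Abelianization (commutator (Coprod A B))) :=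
  Additive.ofMul (Abelianization.of (inlInrCommutator a b))

@[simp]
theorem inlInrCommutatorAb_one_left (b : B) : inlInrCommutatorAb (1 : A) b = 0 := by
  have : inlInrCommutator (1 : A) b = 1 := by ext; simp [inlInrCommutator]
  simp [inlInrCommutatorAb, this]

@[simp]
theorem inlInrCommutatorAb_one_right (a : A) : inlInrCommutatorAb a (1 : B) = 0 := by
  have : inlInrCommutator a (1 : B) = 1 := by ext; simp [inlInrCommutator]
  simp [inlInrCommutatorAb, this]

theorem conjRep_inl_inlInrCommutatorAb (a' a : A) (b : B) :
    conjRep _ (inl a') (inlInrCommutatorAb a b) =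
      inlInrCommutatorAb (a' * a) b - inlInrCommutatorAb a' b := by
  have : conjCommutator (inl a') (inlInrCommutator a b) =
      inlInrCommutator (a' * a) b * (inlInrCommutator a' b)⁻¹ := by
    ext
    simp only [conjCommutator, inlInrCommutator, MonoidHom.coe_mk, OneHom.coe_mk,
      Subgroup.coe_mul, Subgroup.coe_inv, map_mul, commutatorElement_def]
    group
  rw [inlInrCommutatorAb, conjRep_ofMul_of, this, map_mul, map_inv]
  rfl

theorem conjRep_inr_inlInrCommutatorAb (b' : B) (a : A) (b : B) :
    conjRep _ (inr b') (inlInrCommutatorAb a b) =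
      inlInrCommutatorAb a (b' * b) - inlInrCommutatorAb a b' := by
  have : conjCommutator (inr b') (inlInrCommutator a b) =
      (inlInrCommutator a b')⁻¹ * inlInrCommutator a (b' * b) := by
    ext
    simp only [conjCommutator, inlInrCommutator, MonoidHom.coe_mk, OneHom.coe_mk,
      Subgroup.coe_mul, Subgroup.coe_inv, map_mul, commutatorElement_def]
    group
  rw [inlInrCommutatorAb, conjRep_ofMul_of, this, map_mul, map_inv, mul_comm]
  rfl

theorem conjRep_mem_closure_range_inlInrCommutatorAb (q : Coprod A B)
    {v : Additive (Abelianization (commutator (Coprod A B)))}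
    (hv : v ∈ AddSubgroup.closure (Set.range fun ab : A × B => inlInrCommutatorAb ab.1 ab.2)) :
    conjRep _ q v ∈
      AddSubgroup.closure (Set.range fun ab : A × B => inlInrCommutatorAb ab.1 ab.2) := by
  set T := AddSubgroup.closure (Set.range fun ab : A × B => inlInrCommutatorAb ab.1 ab.2)
  suffices T ≤ T.comap (conjRep _ q).toAddMonoidHom from this hv
  induction q using Monoid.Coprod.induction_on with
  | inl a' =>
    refine (AddSubgroup.closure_le _).mpr ?_
    rintro _ ⟨⟨a, b⟩, rfl⟩
    simp only [AddSubgroup.coe_comap, Set.mem_preimage, LinearMap.toAddMonoidHom_coe,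
      conjRep_inl_inlInrCommutatorAb]
    exact sub_mem (AddSubgroup.subset_closure ⟨(a' * a, b), rfl⟩)
      (AddSubgroup.subset_closure ⟨(a', b), rfl⟩)
  | inr b' =>
    refine (AddSubgroup.closure_le _).mpr ?_
    rintro _ ⟨⟨a, b⟩, rfl⟩
    simp only [AddSubgroup.coe_comap, Set.mem_preimage, LinearMap.toAddMonoidHom_coe,
      conjRep_inr_inlInrCommutatorAb]
    exact sub_mem (AddSubgroup.subset_closure ⟨(a, b' * b), rfl⟩)
      (AddSubgroup.subset_closure ⟨(a, b'), rfl⟩)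
  | mul x y hx hy =>
    intro v hv
    simpa [map_mul] using hx (hy hv)

variable [IsMulCommutative A] [IsMulCommutative B]

theorem commute_apply_of_commute_inl_inr {G : Type} [Group G] (f : Coprod A B →* G)
    (h : ∀ a b, Commute (f (inl a)) (f (inr b))) (x y : Coprod A B) :
    Commute (f x) (f y) := by
  induction x using Monoid.Coprod.induction_on with
  | inl a =>
    induction y using Monoid.Coprod.induction_on with
    | inl a' => exact Commute.map (mul_comm' a a') (f.comp inl)
    | inr b => exact h a b
    | mul y z hy hz => rw [map_mul]; exact hy.mul_right hz
  | inr b =>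
    induction y using Monoid.Coprod.induction_on with
    | inl a => exact (h a b).symm
    | inr b' => exact Commute.map (mul_comm' b b') (f.comp inr)
    | mul y z hy hz => rw [map_mul]; exact hy.mul_right hz
  | mul x z hx hz => rw [map_mul]; exact hx.mul_left hz

theorem commutator_eq_normalClosure :
    commutator (Coprod A B) =
      .normalClosure (Set.range fun ab : A × B => ⁅(inl ab.1 : Coprod A B), inr ab.2⁆) := by
  set K : Subgroup (Coprod A B) :=
    .normalClosure (Set.range fun ab : A × B => ⁅(inl ab.1 : Coprod A B), inr ab.2⁆)
  have mem_K_iff (x y : Coprod A B) :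
      ⁅x, y⁆ ∈ K ↔ Commute (QuotientGroup.mk' K x) (QuotientGroup.mk' K y) := by
    rw [← commutatorElement_eq_one_iff_commute, ← map_commutatorElement,
      QuotientGroup.mk'_apply, QuotientGroup.eq_one_iff]
  refine le_antisymm ?_ (Subgroup.normalClosure_le_normal ?_)
  · refine Subgroup.commutator_le.mpr fun x _ y _ => (mem_K_iff x y).mpr ?_
    exact commute_apply_of_commute_inl_inr (QuotientGroup.mk' K)
      (fun a b => (mem_K_iff _ _).mp (Subgroup.subset_normalClosure ⟨(a, b), rfl⟩)) x y
  · rintro _ ⟨ab, rfl⟩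
    exact commutatorElement_mem_commutator _ _

theorem closure_range_inlInrCommutatorAb :
    AddSubgroup.closure (Set.range fun ab : A × B => inlInrCommutatorAb ab.1 ab.2) = ⊤ := by
  set T := AddSubgroup.closure (Set.range fun ab : A × B => inlInrCommutatorAb ab.1 ab.2)
  let H := ((AddSubgroup.toSubgroup' T).comap Abelianization.of).map (commutator _).subtype
  have : H.Normal := by
    refine ⟨?_⟩
    rintro _ ⟨γ, hγ, rfl⟩ q
    refine ⟨conjCommutator q γ, ?_, rfl⟩
    have := conjRep_mem_closure_range_inlInrCommutatorAb q
      (v := Additive.ofMul (Abelianization.of γ)) hγ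
    rwa [conjRep_ofMul_of] at this
  have hle := commutator_eq_normalClosure.trans_le (Subgroup.normalClosure_le_normal (N := H) ?_)
  · rw [eq_top_iff]
    rintro v -
    obtain ⟨γ, rfl⟩ := QuotientGroup.mk_surjective (Additive.toMul v)
    obtain ⟨γ', hγ', hγγ'⟩ := hle γ.2
    rw [Subgroup.subtype_apply, ← Subtype.ext_iff] at hγγ'
    subst hγγ'
    exact hγ'
  · rintro _ ⟨⟨a, b⟩, rfl⟩
    exact ⟨inlInrCommutator a b, AddSubgroup.subset_closure ⟨(a, b), rfl⟩, rfl⟩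

end Generators

section Magnus

variable {A B : Type} [Group A] [Group B]

noncomputable def leftMulAut : A × B →* MulAut (Multiplicative (MonoidAlgebra ℤ (A × B))) :=
  (MulAutMultiplicative _).symm.toMonoidHom.comp
    ((DistribMulAction.toAddAut _ _).comp ((Units.map (of ℤ (A × B))).comp toUnits.toMonoidHom))

theorem leftMulAut_apply (q : A × B) (v : Multiplicative (MonoidAlgebra ℤ (A × B))) :
    leftMulAut q v = Multiplicative.ofAdd (of ℤ (A × B) q * v.toAdd) := rfl

abbrev MagnusGroup (A B : Type) [Group A] [Group B] : Type :=
  Multiplicative (MonoidAlgebra ℤ (A × B)) ⋊[leftMulAut] (A × B)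

noncomputable def magnusInr : B →* MagnusGroup A B where
  toFun b := ⟨Multiplicative.ofAdd (of ℤ (A × B) (1, b) - 1), (1, b)⟩
  map_one' := by
    refine SemidirectProduct.ext ?_ rfl
    show Multiplicative.ofAdd (of ℤ (A × B) 1 - 1) = 1
    rw [map_one, sub_self]
    rfl
  map_mul' b b' := by
    refine SemidirectProduct.ext ?_ (by rw [SemidirectProduct.mul_right, Prod.mk_mul_mk, one_mul])
    show Multiplicative.ofAdd (of ℤ (A × B) (1, b * b') - 1) =
      Multiplicative.ofAdd (of ℤ (A × B) (1, b) - 1) *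
        leftMulAut (1, b) (Multiplicative.ofAdd (of ℤ (A × B) (1, b') - 1))
    rw [leftMulAut_apply, toAdd_ofAdd, ← ofAdd_add, mul_sub, ← map_mul, Prod.mk_mul_mk, one_mul,
      mul_one, sub_add_sub_cancel']

noncomputable def magnus : Coprod A B →* MagnusGroup A B :=
  lift (SemidirectProduct.inr.comp (MonoidHom.inl A B)) magnusInr

theorem magnus_inl (a : A) : magnus (inl a : Coprod A B) = ⟨1, (a, 1)⟩ := by
  rw [magnus, lift_apply_inl]
  rfl

theorem magnus_inr (b : B) :
    magnus (inr b : Coprod A B) = ⟨Multiplicative.ofAdd (of ℤ (A × B) (1, b) - 1), (1, b)⟩ := by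
  rw [magnus, lift_apply_inr]
  rfl

theorem magnus_commutatorElement (a : A) (b : B) :
    magnus ⁅(inl a : Coprod A B), inr b⁆ =
      ⟨Multiplicative.ofAdd ((of ℤ (A × B) (a, 1) - 1) * (of ℤ (A × B) (1, b) - 1)), 1⟩ := by
  rw [map_commutatorElement, magnus_inl, magnus_inr, commutatorElement_def, mul_inv_eq_iff_eq_mul,
    mul_inv_eq_iff_eq_mul]
  refine SemidirectProduct.ext ?_ ?_
  · simp only [SemidirectProduct.mul_left, SemidirectProduct.mul_right, leftMulAut_apply,
      map_one, MulAut.one_apply, toAdd_ofAdd, mul_one, one_mul, ← ofAdd_add]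
    congr 1
    noncomm_ring
  · show ((a, 1) : A × B) * (1, b) = 1 * (1, b) * (a, 1)
    simp

variable [IsMulCommutative A] [IsMulCommutative B]

theorem magnus_right_eq_one {γ : Coprod A B} (hγ : γ ∈ commutator (Coprod A B)) :
    (magnus γ).right = 1 := by
  suffices commutator (Coprod A B) ≤ (SemidirectProduct.rightHom.comp magnus).ker from this hγ
  refine Subgroup.commutator_le.mpr fun x _ y _ => ?_
  rw [MonoidHom.mem_ker, map_commutatorElement, commutatorElement_eq_one_iff_mul_comm]
  exact mul_comm' _ _

noncomputable def magnusLeft :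
    commutator (Coprod A B) →* Multiplicative (MonoidAlgebra ℤ (A × B)) where
  toFun γ := (magnus (γ : Coprod A B)).left
  map_one' := by simp
  map_mul' γ η := by
    simp [magnus_right_eq_one γ.2, SemidirectProduct.mul_left]

theorem magnus_eq_inl_magnusLeft (γ : commutator (Coprod A B)) :
    magnus (γ : Coprod A B) = SemidirectProduct.inl (magnusLeft γ) :=
  SemidirectProduct.ext rfl (magnus_right_eq_one γ.2)

theorem magnusLeft_conjCommutator (q : Coprod A B) (γ : commutator (Coprod A B)) :
    magnusLeft (conjCommutator q γ) = leftMulAut (magnus q).right (magnusLeft γ) := by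
  have key : magnus (q * (γ : Coprod A B) * q⁻¹) =
      SemidirectProduct.inl (leftMulAut (magnus q).right (magnusLeft γ)) := by
    rw [map_mul, map_mul, map_inv, magnus_eq_inl_magnusLeft, SemidirectProduct.mul_inl_mul_inv]
  exact congrArg SemidirectProduct.left key

noncomputable def magnusAb :
    Additive (Abelianization (commutator (Coprod A B))) →+ MonoidAlgebra ℤ (A × B) :=
  MonoidHom.toAdditiveLeft (Abelianization.lift magnusLeft)

theorem magnusAb_ofMul_of (γ : commutator (Coprod A B)) :
    magnusAb (Additive.ofMul (Abelianization.of γ)) = (magnusLeft γ).toAdd := by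
  simp [magnusAb]

theorem magnusAb_inlInrCommutatorAb (a : A) (b : B) :
    magnusAb (inlInrCommutatorAb a b) =
      (of ℤ (A × B) (a, 1) - 1) * (of ℤ (A × B) (1, b) - 1) := by
  rw [inlInrCommutatorAb, magnusAb_ofMul_of]
  exact congrArg (fun x => Multiplicative.toAdd (SemidirectProduct.left x))
    (magnus_commutatorElement a b)

theorem magnusAb_conjRep (q : Coprod A B)
    (v : Additive (Abelianization (commutator (Coprod A B)))) :
    magnusAb (conjRep _ q v) = of ℤ (A × B) (magnus q).right * magnusAb v := by
  obtain ⟨γ, hγ⟩ := QuotientGroup.mk_surjective (Additive.toMul v)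
  obtain rfl : Additive.ofMul (Abelianization.of γ) = v := congrArg Additive.ofMul hγ
  rw [conjRep_ofMul_of, magnusAb_ofMul_of, magnusAb_ofMul_of, magnusLeft_conjCommutator]
  rfl

end Magnus

section QuotientNorm

variable {A B : Type} [Group A] [Group B]

variable (A B) in
abbrev conjRepInl : Representation ℤ A (Additive (Abelianization (commutator (Coprod A B)))) :=
  (conjRep (Coprod A B)).comp inl

theorem asAlgebraHom_sum_pow_inlInrCommutatorAb (ε : A) (b : B) (k : ℕ) :
    (conjRepInl A B).asAlgebraHom (∑ i ∈ Finset.range k, of ℤ A (ε ^ i))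
        (inlInrCommutatorAb ε b) = inlInrCommutatorAb (ε ^ k) b := by
  simp only [map_sum, LinearMap.sum_apply, Representation.asAlgebraHom_of, MonoidHom.comp_apply,
    conjRep_inl_inlInrCommutatorAb, ← pow_succ]
  rw [Finset.sum_range_sub (fun i => inlInrCommutatorAb (ε ^ i) b), pow_zero,
    inlInrCommutatorAb_one_left, sub_zero]

theorem magnusAb_asAlgebraHom [IsMulCommutative A] [IsMulCommutative B] (t : MonoidAlgebra ℤ A)
    (v : Additive (Abelianization (commutator (Coprod A B)))) :
    magnusAb ((conjRepInl A B).asAlgebraHom t v) =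
      mapDomainRingHom ℤ (MonoidHom.inl A B) t * magnusAb v := by
  induction t using MonoidAlgebra.induction_on with
  | of a =>
    rw [Representation.asAlgebraHom_of, MonoidHom.comp_apply, magnusAb_conjRep, magnus_inl]
    simp
  | add x y hx hy => rw [map_add, LinearMap.add_apply, map_add, hx, hy, map_add, add_mul]
  | smul r x hx =>
    rw [map_zsmul, LinearMap.smul_apply, map_zsmul, hx, map_zsmul, smul_mul_assoc]

variable {ι : Type} [Fintype ι] [DecidableEq ι]

variable (ε : A) (b : ι → B) in
noncomputable def piQuotientNormToAb :
    (ι → MonoidAlgebra ℤ A ⧸ Ideal.span {normElement ε}) →ₗ[MonoidAlgebra ℤ A]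
      (conjRepInl A B).asModule :=
  LinearMap.lsum _ _ ℕ fun i => Submodule.liftQSpanSingleton _
    (LinearMap.toSpanSingleton _ _
      ((conjRepInl A B).asModuleEquiv.symm (inlInrCommutatorAb ε (b i))))
    ((conjRepInl A B).asModuleEquiv.injective (by
      rw [LinearMap.toSpanSingleton_apply, Representation.asModuleEquiv_map_smul,
        LinearEquiv.apply_symm_apply, asAlgebraHom_sum_pow_inlInrCommutatorAb, pow_orderOf_eq_one,
        inlInrCommutatorAb_one_left, map_zero]))

theorem asModuleEquiv_piQuotientNormToAb_mk (ε : A) (b : ι → B) (t : ι → MonoidAlgebra ℤ A) :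
    (conjRepInl A B).asModuleEquiv
        (piQuotientNormToAb ε b fun i => Submodule.Quotient.mk (t i)) =
      ∑ i, (conjRepInl A B).asAlgebraHom (t i) (inlInrCommutatorAb ε (b i)) := by
  simp [piQuotientNormToAb, Representation.asModuleEquiv_map_smul]

variable [Finite A] [IsMulCommutative B] {ε : A} {b : ι → B}

theorem piQuotientNormToAb_surjective (hε : ∀ a, a ∈ Subgroup.zpowers ε)
    (hb : ∀ b', b' ≠ 1 → b' ∈ Set.range b) :
    Function.Surjective (piQuotientNormToAb ε b) := by
  classical
  have : IsCyclic A := ⟨ε, hε⟩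
  let S := (piQuotientNormToAb ε b).toAddMonoidHom.range.map
    (conjRepInl A B).asModuleEquiv.toAddMonoidHom
  have generators_mem : Set.range (fun ab : A × B => inlInrCommutatorAb ab.1 ab.2) ⊆ S := by
    rintro _ ⟨⟨a, b'⟩, rfl⟩
    obtain ⟨k, -, rfl⟩ := Finset.mem_image.mp (mem_zpowers_iff_mem_range_orderOf.mp (hε a))
    obtain rfl | hb' := eq_or_ne b' 1
    · show inlInrCommutatorAb (ε ^ k) (1 : B) ∈ S
      rw [inlInrCommutatorAb_one_right]
      exact S.zero_mem
    obtain ⟨i, rfl⟩ := hb b' hb'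
    let s : ι → MonoidAlgebra ℤ A := Pi.single i (∑ j ∈ Finset.range k, of ℤ A (ε ^ j))
    refine ⟨_, ⟨fun j => Submodule.Quotient.mk (s j), rfl⟩, ?_⟩
    show (conjRepInl A B).asModuleEquiv
        (piQuotientNormToAb ε b fun j => Submodule.Quotient.mk (s j)) =
      inlInrCommutatorAb (ε ^ k) (b i)
    rw [asModuleEquiv_piQuotientNormToAb_mk, Fintype.sum_eq_single i fun j hj => by simp [s, hj]]
    simp only [s, Pi.single_eq_same, asAlgebraHom_sum_pow_inlInrCommutatorAb]
  have hS : S = ⊤ := top_le_iff.mp <| closure_range_inlInrCommutatorAb (A := A) (B := B) ▸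
    (AddSubgroup.closure_le S).mpr generators_mem
  intro m
  obtain ⟨_, ⟨x, rfl⟩, hx⟩ := hS.ge (AddSubgroup.mem_top ((conjRepInl A B).asModuleEquiv m))
  exact ⟨x, (conjRepInl A B).asModuleEquiv.injective hx⟩

theorem piQuotientNormToAb_injective (hε : ∀ a, a ∈ Subgroup.zpowers ε)
    (hb : Function.Injective b) (hb1 : ∀ i, b i ≠ 1) :
    Function.Injective (piQuotientNormToAb ε b) := by
  have : IsCyclic A := ⟨ε, hε⟩
  rw [injective_iff_map_eq_zero]
  intro x hx
  choose t ht using fun i => Submodule.Quotient.mk_surjective _ (x i)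
  obtain rfl : (fun i => Submodule.Quotient.mk (t i)) = x := funext ht
  have hsum := congrArg (fun x => magnusAb ((conjRepInl A B).asModuleEquiv x)) hx
  simp only [asModuleEquiv_piQuotientNormToAb_mk, map_zero, map_sum, magnusAb_asAlgebraHom,
    magnusAb_inlInrCommutatorAb] at hsum
  have inl_ε : mapDomainRingHom ℤ (MonoidHom.inl A B) (of ℤ A ε) = of ℤ (A × B) (ε, 1) := by
    simp [of_apply]
  have hs := eq_zero_of_sum_mapDomainRingHom_inl_mul_of_sub_one hb hb1
    (s := fun i => t i * (of ℤ A ε - 1)) (by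
      simpa only [map_mul, map_sub, map_one, inl_ε, mul_assoc] using hsum)
  funext i
  exact (Submodule.Quotient.mk_eq_zero _).mpr
    (mem_span_normElement_of_mul_sub_one_eq_zero hε (hs i))

end QuotientNorm

end Monoid.Coprod

/-- Let `A = ⟨ε_A⟩` and `B` be cyclic of prime order `p`, `N = A ∗ B`,
and `Γ = [N,N]`.  Then `Γ^{ab}`, with the conjugation action of `A`, is isomorphic as a
`ℤ[A]`-module to `(ℤ[A]/(1 + ε_A + ⋯ + ε_A^{p-1}))^{p-1}`. -/
theorem abelianization_commutator_as_ZA_module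
    (p : ℕ) (hp : p.Prime)
    (A B : Type) [Group A] [Group B]
    (εA : A) (hεA : orderOf εA = p) (hgenA : ∀ a : A, a ∈ Subgroup.zpowers εA)
    [IsCyclic B] (hB : Nat.card B = p) :
    ∃ e : (Fin (p - 1) →
            (MonoidAlgebra ℤ A ⧸
              Ideal.span {∑ i ∈ Finset.range p, MonoidAlgebra.of ℤ A (εA ^ i)}))
          ≃ₗ[ℤ] Additive (Abelianization (commutator (Monoid.Coprod A B))),
      ∀ (a : A) (x : Fin (p - 1) →
            (MonoidAlgebra ℤ A ⧸
              Ideal.span {∑ i ∈ Finset.range p, MonoidAlgebra.of ℤ A (εA ^ i)})),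
        e (MonoidAlgebra.of ℤ A a • x) =
          Additive.ofMul (conjAb (Monoid.Coprod.inl a) (Additive.toMul (e x))) := by
  classical
  subst hεA
  have : Finite A := by
    refine Nat.finite_of_card_ne_zero ?_
    rw [← Subgroup.card_top, ← (Subgroup.eq_top_iff' _).mpr hgenA, Nat.card_zpowers]
    exact hp.ne_zero
  have : Finite B := Nat.finite_of_card_ne_zero (hB ▸ hp.ne_zero)
  have : Fintype B := Fintype.ofFinite B
  let e : Fin (orderOf εA - 1) ≃ {b : B // b ≠ 1} := Fintype.equivOfCardEq (by
    rw [Fintype.card_fin, Fintype.card_subtype_compl, Fintype.card_subtype_eq,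
      ← Nat.card_eq_fintype_card, hB])
  let E := LinearEquiv.ofBijective (Monoid.Coprod.piQuotientNormToAb εA fun j => (e j : B))
    ⟨Monoid.Coprod.piQuotientNormToAb_injective hgenA (Subtype.val_injective.comp e.injective)
        fun j => (e j).2,
      Monoid.Coprod.piQuotientNormToAb_surjective hgenA fun b hb => ⟨e.symm ⟨b, hb⟩, by simp⟩⟩
  let ρ := Monoid.Coprod.conjRepInl A B
  refine ⟨(E.toAddEquiv.trans ρ.asModuleEquiv.toAddEquiv).toIntLinearEquiv, fun a x => ?_⟩
  show ρ.asModuleEquiv (E (MonoidAlgebra.of ℤ A a • x)) = _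
  rw [map_smul, Representation.asModuleEquiv_map_smul, Representation.asAlgebraHom_of]
  rfl
end

section
/- Let A and B be groups, let N = A ∗ B be their free product, and let P be an abelian group with a right N-action by automorphisms. Then the map Der(A∗B, P) → Der(A,P) × Der(B,P), sending a derivation to the pair of its restrictions to A and to B, is a bijection. -/
/-!
A derivation `d : G → P` is the same thing as a monoid homomorphism `g ↦ (d g, g)` from `G` into
the semidirect product `P ⋊ G` that splits the projection onto `G`. The universal property of the
free product `A ∗ B` glues splittings over `A` and over `B` into a splitting over `A ∗ B`, which
gives surjectivity; injectivity holds because `A ∗ B` is generated by `A` and `B` and a derivation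
on a product is determined by its values on the factors.
-/

open MulOpposite Monoid.Coprod

variable {G H P : Type*} [Monoid G] [Monoid H] [AddMonoid P]

/-- A right action `p ↦ p^γ` of `G` on `P` is encoded as `ρ : Gᵐᵒᵖ →* AddMonoid.End P`,
with `p^γ = ρ (op γ) p`. -/
def IsCrossedHom (ρ : Gᵐᵒᵖ →* AddMonoid.End P) (d : G → P) : Prop :=
  ∀ γ η, d (γ * η) = ρ (op η) (d γ) + d η

namespace IsCrossedHom

variable {ρ : Gᵐᵒᵖ →* AddMonoid.End P}

theorem map_one [IsRightCancelAdd P] {d : G → P} (hd : IsCrossedHom ρ d) : d 1 = 0 := by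
  have h := hd 1 1
  rwa [mul_one, op_one, ρ.map_one, AddMonoid.End.one_apply, right_eq_add] at h

theorem coprod_ext {M N : Type*} [Monoid M] [Monoid N] {ρ : (M ∗ N)ᵐᵒᵖ →* AddMonoid.End P}
    {d d' : M ∗ N → P} (hd : IsCrossedHom ρ d) (hd' : IsCrossedHom ρ d')
    (hinl : ∀ m, d (inl m) = d' (inl m)) (hinr : ∀ n, d (inr n) = d' (inr n)) : d = d' := by
  funext γ
  induction γ using Monoid.Coprod.induction_on with
  | inl m => exact hinl m
  | inr n => exact hinr n
  | mul x y hx hy => rw [hd, hd', hx, hy]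

end IsCrossedHom

@[ext]
structure SemidirectMonoid (ρ : Gᵐᵒᵖ →* AddMonoid.End P) where
  fst : P
  snd : G

namespace SemidirectMonoid

variable {ρ : Gᵐᵒᵖ →* AddMonoid.End P}

instance : Mul (SemidirectMonoid ρ) where
  mul x y := ⟨ρ (op y.snd) x.fst + y.fst, x.snd * y.snd⟩

instance : One (SemidirectMonoid ρ) where
  one := ⟨0, 1⟩

@[simp] theorem mul_fst (x y : SemidirectMonoid ρ) : (x * y).fst = ρ (op y.snd) x.fst + y.fst :=
  rfl

@[simp] theorem mul_snd (x y : SemidirectMonoid ρ) : (x * y).snd = x.snd * y.snd := rfl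

@[simp] theorem one_fst : (1 : SemidirectMonoid ρ).fst = 0 := rfl

@[simp] theorem one_snd : (1 : SemidirectMonoid ρ).snd = 1 := rfl

instance : Monoid (SemidirectMonoid ρ) where
  mul_assoc x y z := by
    ext <;> simp [mul_assoc, add_assoc]
  one_mul x := by ext <;> simp
  mul_one x := by ext <;> simp

def sndHom : SemidirectMonoid ρ →* G where
  toFun := snd
  map_one' := rfl
  map_mul' _ _ := rfl

def ofCrossedHom [IsRightCancelAdd P] (f : H →* G) {d : H → P}
    (hd : IsCrossedHom (ρ.comp (MonoidHom.op f)) d) : H →* SemidirectMonoid ρ where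
  toFun h := ⟨d h, f h⟩
  map_one' := by ext <;> simp [hd.map_one]
  map_mul' h h' := by ext <;> simp [hd h h']

theorem isCrossedHom_fst (φ : G →* SemidirectMonoid ρ) (hφ : sndHom.comp φ = MonoidHom.id G) :
    IsCrossedHom ρ fun g ↦ (φ g).fst := by
  intro γ η
  change (φ (γ * η)).fst = _
  rw [φ.map_mul, mul_fst, show (φ η).snd = η from DFunLike.congr_fun hφ η]

end SemidirectMonoid

open SemidirectMonoid in
theorem IsCrossedHom.exists_coprod [IsRightCancelAdd P] {M N : Type*} [Monoid M] [Monoid N]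
    {ρ : (M ∗ N)ᵐᵒᵖ →* AddMonoid.End P} {dM : M → P} {dN : N → P}
    (hM : IsCrossedHom (ρ.comp (MonoidHom.op inl)) dM)
    (hN : IsCrossedHom (ρ.comp (MonoidHom.op inr)) dN) :
    ∃ d, IsCrossedHom ρ d ∧ (∀ m, d (inl m) = dM m) ∧ ∀ n, d (inr n) = dN n := by
  let φ : M ∗ N →* SemidirectMonoid ρ := lift (ofCrossedHom inl hM) (ofCrossedHom inr hN)
  have hφ : sndHom.comp φ = MonoidHom.id (M ∗ N) := by ext <;> rfl
  exact ⟨fun γ ↦ (φ γ).fst, isCrossedHom_fst φ hφ, fun _ ↦ rfl, fun _ ↦ rfl⟩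

/-- Let `A`, `B` be groups, `N = A ∗ B` their free product, and `P` an
abelian group with a right `N`-action by automorphisms.  Then restriction to `A` and `B`
is a bijection `Der(A∗B, P) → Der(A,P) × Der(B,P)`. -/
theorem derivations_coprod_equiv_prod
    (A B P : Type) [Group A] [Group B] [AddCommGroup P]
    (act : Monoid.Coprod A B → (P →+ P))
    (hact1 : act 1 = AddMonoidHom.id P)
    (hactmul : ∀ γ η : Monoid.Coprod A B, act (γ * η) = (act η).comp (act γ)) :
    Function.Bijective
      (fun d : {d : Monoid.Coprod A B → P //
          ∀ γ η : Monoid.Coprod A B, d (γ * η) = act η (d γ) + d η} =>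
        ((⟨fun a : A => d.1 (Monoid.Coprod.inl a), by
            intro a a'
            have := d.2 (Monoid.Coprod.inl a) (Monoid.Coprod.inl a')
            simpa [map_mul] using this⟩,
          ⟨fun b : B => d.1 (Monoid.Coprod.inr b), by
            intro b b'
            have := d.2 (Monoid.Coprod.inr b) (Monoid.Coprod.inr b')
            simpa [map_mul] using this⟩) :
          {dA : A → P // ∀ a a' : A,
              dA (a * a') = act (Monoid.Coprod.inl a') (dA a) + dA a'} ×
          {dB : B → P // ∀ b b' : B,
              dB (b * b') = act (Monoid.Coprod.inr b') (dB b) + dB b'})) := by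
  let ρ : (A ∗ B)ᵐᵒᵖ →* AddMonoid.End P :=
    { toFun γ := act γ.unop
      map_one' := hact1
      map_mul' γ η := hactmul η.unop γ.unop }
  constructor
  · rintro ⟨d, hd⟩ ⟨d', hd'⟩ h
    simp only [Prod.mk.injEq, Subtype.mk.injEq, funext_iff] at h
    exact Subtype.ext (IsCrossedHom.coprod_ext (ρ := ρ) hd hd' h.1 h.2)
  · rintro ⟨⟨dA, hA⟩, ⟨dB, hB⟩⟩
    obtain ⟨d, hd, hdA, hdB⟩ := IsCrossedHom.exists_coprod (ρ := ρ) hA hB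
    exact ⟨⟨d, hd⟩, Prod.ext (Subtype.ext (funext hdA)) (Subtype.ext (funext hdB))⟩
end

section
/- Let p be a prime and K a field of characteristic p. Let m ≥ 1 be an integer and write m = qp + r with 0 ≤ r < p. Let V_m ⊆ K[T] be the K-vector space of polynomials of degree < m, and let the cyclic group C = ⟨σ⟩ of order p act K-linearly on V_m by (σ·F)(T) = F(T+1). Then V_m is isomorphic as a K[C]-module to J_p^{⊕q} ⊕ J_r. -/
/-!
`σ - 1` acts on `K[X]` as the forward difference `Δ f = f(X + 1) - f`, which lowers degrees and
sends the falling factorial `X(X - 1)⋯(X - k)` to `k + 1` times `X(X - 1)⋯(X - k + 1)`; in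
characteristic `p` the polynomial `u = X ^ p - X` is invariant, so `Δ` commutes with
multiplication by `u ^ ℓ`. Hence `[a] ↦ a · (σ - 1) ^ (p - s) · u ^ ℓ X(X - 1)⋯(X - p + 2)` is a
well-defined map `J_s → K[X]` (as `Δ ^ p` kills polynomials of degree `< p`), whose image contains
a nonzero multiple of `u ^ ℓ X(X - 1)⋯(X - i + 1)` for each `i < s`: the factors are products of
integers below `p`. Taking the blocks `(s, ℓ) = (p, ℓ)` for `ℓ < q` and `(r, q)`, these
polynomials have every degree `< m = qp + r`, so the sum of the blocks maps onto `V_m`. As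
`J_s` is a quotient of `K[X] ⧸ (X ^ s)`, its dimension is at most `s`, and the surjection
`J_p^q ⊕ J_r → V_m` is an isomorphism.
-/

open Polynomial

/-- The indecomposable `K[C]`-module `J_ℓ = K[C]/((σ-1)^ℓ)` for a cyclic group
`C = ⟨σ⟩` of order `p`. -/
abbrev Jmod (K : Type) [Field K] (C : Type) [CommGroup C] (σ : C) (ℓ : ℕ) :=
  MonoidAlgebra K C ⧸ Ideal.span {(MonoidAlgebra.of K C σ - 1) ^ ℓ}

open Module MonoidAlgebra

namespace Polynomial

section ForwardDifference

variable {R : Type*} [CommRing R]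

theorem degree_taylor_sub_lt (r : R) {f : R[X]} (hf : f ≠ 0) :
    (taylor r f - f).degree < f.degree := by
  simpa only [degree_taylor] using
    degree_sub_lt_left (degree_taylor f r) (by rwa [Ne, taylor_eq_zero]) (leadingCoeff_taylor r f)

theorem taylor_sub_self_mem_degreeLT (r : R) {n : ℕ} {f : R[X]} (hf : f ∈ degreeLT R (n + 1)) :
    taylor r f - f ∈ degreeLT R n := by
  rcases eq_or_ne f 0 with rfl | hf0
  · simp
  rw [degreeLT_succ_eq_degreeLE, mem_degreeLE] at hf
  exact mem_degreeLT.mpr ((degree_taylor_sub_lt r hf0).trans_le hf)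

theorem pow_taylor_sub_one_apply_mem_degreeLT (r : R) {n : ℕ} (t : ℕ) {f : R[X]}
    (hf : f ∈ degreeLT R (n + t)) : ((taylor r - 1) ^ t) f ∈ degreeLT R n := by
  induction t generalizing f with
  | zero => simpa using hf
  | succ t ih =>
    rw [pow_succ, Module.End.mul_apply, LinearMap.sub_apply, Module.End.one_apply]
    exact ih (taylor_sub_self_mem_degreeLT r hf)

theorem pow_taylor_sub_one_apply_eq_zero (r : R) {n : ℕ} {f : R[X]} (hf : f ∈ degreeLT R n) :
    ((taylor r - 1) ^ n) f = 0 := by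
  simpa [mem_degreeLT, Nat.WithBot.lt_zero_iff] using
    pow_taylor_sub_one_apply_mem_degreeLT r (n := 0) n (by rwa [zero_add])

theorem taylor_one_descPochhammer_succ_sub (n : ℕ) :
    taylor 1 (descPochhammer R (n + 1)) - descPochhammer R (n + 1) =
      ((n + 1 : ℕ) : R) • descPochhammer R n := by
  nth_rw 1 [descPochhammer_succ_left]
  rw [taylor_apply, mul_comp, comp_assoc, descPochhammer_succ_right, smul_eq_C_mul]
  simp only [X_comp, sub_comp, one_comp, add_sub_cancel_right, comp_X, map_one, Nat.cast_add,
    Nat.cast_one, map_add, map_natCast]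
  ring

theorem pow_taylor_one_sub_one_descPochhammer (k t : ℕ) :
    ((taylor (1 : R) - 1) ^ t) (descPochhammer R (k + t)) =
      ((k + t).descFactorial t : R) • descPochhammer R k := by
  induction t with
  | zero => simp
  | succ t ih =>
    rw [pow_succ, Module.End.mul_apply, LinearMap.sub_apply, Module.End.one_apply, ← add_assoc,
      taylor_one_descPochhammer_succ_sub, map_smul, ih, smul_smul, Nat.succ_descFactorial_succ]
    push_cast
    rfl

end ForwardDifference

theorem Monic.mul_mem_degreeLT {R : Type*} [CommRing R] [IsDomain R] {g f : R[X]}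
    (hg : g.Monic) {n : ℕ} (hf : f ∈ degreeLT R n) : g * f ∈ degreeLT R (g.natDegree + n) := by
  rcases eq_or_ne f 0 with rfl | hf0
  · simp
  rw [mem_degreeLT, degree_eq_natDegree hf0, Nat.cast_lt] at hf
  rw [mem_degreeLT, degree_eq_natDegree (mul_ne_zero hg.ne_zero hf0),
    Polynomial.natDegree_mul hg.ne_zero hf0, Nat.cast_lt]
  omega

theorem taylor_X_pow_char_sub_X {R : Type*} [CommRing R] (p : ℕ) [Fact p.Prime] [CharP R p]
    {t : R} (ht : t ^ p = t) : taylor t (X ^ p - X : R[X]) = X ^ p - X := by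
  rw [map_sub, taylor_X_pow, taylor_X, add_pow_char, ← C_pow, ht]
  ring

section ArtinSchreierPochhammer

variable (R : Type*) [CommRing R] [IsDomain R] {p : ℕ}

theorem descPochhammer_mem_degreeLT (n : ℕ) : descPochhammer R n ∈ degreeLT R (n + 1) := by
  rw [mem_degreeLT, degree_eq_natDegree (monic_descPochhammer R n).ne_zero,
    descPochhammer_natDegree, Nat.cast_lt]
  exact n.lt_succ_self

theorem monic_X_pow_sub_X (hp : 1 < p) : (X ^ p - X : R[X]).Monic :=
  monic_X_pow_sub (by rw [degree_X]; exact_mod_cast hp)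

theorem natDegree_X_pow_sub_X (hp : 1 < p) : (X ^ p - X : R[X]).natDegree = p := by
  rw [natDegree_sub_eq_left_of_natDegree_lt] <;> simp [hp]

theorem monic_X_pow_sub_X_pow_mul_descPochhammer (hp : 1 < p) (ℓ i : ℕ) :
    ((X ^ p - X : R[X]) ^ ℓ * descPochhammer R i).Monic :=
  ((monic_X_pow_sub_X R hp).pow ℓ).mul (monic_descPochhammer R i)

theorem natDegree_X_pow_sub_X_pow_mul_descPochhammer (hp : 1 < p) (ℓ i : ℕ) :
    ((X ^ p - X : R[X]) ^ ℓ * descPochhammer R i).natDegree = ℓ * p + i := by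
  rw [((monic_X_pow_sub_X R hp).pow ℓ).natDegree_mul (monic_descPochhammer R i),
    (monic_X_pow_sub_X R hp).natDegree_pow, natDegree_X_pow_sub_X R hp, descPochhammer_natDegree]

noncomputable def artinSchreierPochhammer (hp : 1 < p) : Sequence R where
  elems' d := (X ^ p - X) ^ (d / p) * descPochhammer R (d % p)
  degree_eq' d := by
    rw [degree_eq_natDegree (monic_X_pow_sub_X_pow_mul_descPochhammer R hp _ _).ne_zero,
      natDegree_X_pow_sub_X_pow_mul_descPochhammer R hp, Nat.cast_inj, Nat.div_add_mod']

theorem artinSchreierPochhammer_apply (hp : 1 < p) (d : ℕ) :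
    artinSchreierPochhammer R hp d = (X ^ p - X) ^ (d / p) * descPochhammer R (d % p) := rfl

end ArtinSchreierPochhammer

end Polynomial

theorem Nat.cast_descFactorial_ne_zero (K : Type*) [CommRing K] {p : ℕ} [CharP K p]
    [Fact p.Prime] {n t : ℕ} (hn : n < p) (ht : t ≤ n) : (n.descFactorial t : K) ≠ 0 := by
  rw [Ne, CharP.cast_eq_zero_iff K p]
  intro h
  have := (Nat.Prime.dvd_factorial Fact.out).mp
    (h.trans (Dvd.intro_left _ (Nat.factorial_mul_descFactorial ht)))
  omega

section TaylorRepresentation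

variable (R : Type*) [CommRing R] (p : ℕ) [CharP R p]

noncomputable def zmodTaylorHom : Multiplicative (ZMod p) →* Module.End R R[X] where
  toFun x := taylor (ZMod.castHom dvd_rfl R x.toAdd)
  map_one' := LinearMap.ext fun f => by simp
  map_mul' x y := LinearMap.ext fun f => by simp [taylor_taylor]

variable {C : Type*} [Group C] {σ : C} (hgen : ∀ c, c ∈ Subgroup.zpowers σ)
  (hσ : p ∣ orderOf σ)

/-- `σ ^ n` acts as `f ↦ f(X + n)`. The shift is routed through `ZMod p`, which makes it well
defined and puts it in the prime field, where `t ^ p = t`. -/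
noncomputable def taylorRep : Representation R C R[X] :=
  (zmodTaylorHom R p).comp <| monoidHomOfForallMemZpowers hgen (g' := Multiplicative.ofAdd 1) <| by
    rwa [orderOf_ofAdd_eq_addOrderOf, ZMod.addOrderOf_one]

theorem taylorRep_gen : taylorRep R p hgen hσ σ = taylor (1 : R) := by
  simp [taylorRep, zmodTaylorHom]

theorem exists_taylorRep_eq_taylor [Fact p.Prime] (c : C) :
    ∃ t : R, t ^ p = t ∧ taylorRep R p hgen hσ c = taylor t :=
  ⟨_, by rw [← map_pow, ZMod.pow_card], rfl⟩

theorem asAlgebraHom_taylorRep_sub_one_pow (n : ℕ) :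
    (taylorRep R p hgen hσ).asAlgebraHom ((of R C σ - 1) ^ n) = (taylor (1 : R) - 1) ^ n := by
  rw [map_pow, map_sub, map_one, Representation.asAlgebraHom_of, taylorRep_gen]

theorem asAlgebraHom_taylorRep_mem_degreeLT (a : MonoidAlgebra R C) {n : ℕ} {f : R[X]}
    (hf : f ∈ degreeLT R n) : (taylorRep R p hgen hσ).asAlgebraHom a f ∈ degreeLT R n :=
  Representation.asAlgebraHom_mem_of_forall_mem _ _ (fun _ _ hv => taylor_mem_degreeLT.mpr hv)
    f hf a

theorem asAlgebraHom_taylorRep_X_pow_sub_X_pow_mul [Fact p.Prime] (a : MonoidAlgebra R C)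
    (ℓ : ℕ) (f : R[X]) :
    (taylorRep R p hgen hσ).asAlgebraHom a ((X ^ p - X) ^ ℓ * f) =
      (X ^ p - X) ^ ℓ * (taylorRep R p hgen hσ).asAlgebraHom a f := by
  induction a using MonoidAlgebra.induction_on with
  | of c =>
    obtain ⟨t, ht, hc⟩ := exists_taylorRep_eq_taylor R p hgen hσ c
    rw [Representation.asAlgebraHom_of, hc, taylor_mul, taylor_pow, taylor_X_pow_char_sub_X p ht]
  | add a b ha hb => simp only [map_add, LinearMap.add_apply, ha, hb, mul_add]
  | smul r a ha => simp only [map_smul, LinearMap.smul_apply, ha, mul_smul_comm]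

end TaylorRepresentation

section QuotientLift

variable {R A M : Type*} [CommRing R] [CommRing A] [Algebra R A] [AddCommGroup M] [Module R M]
  (θ : A →ₐ[R] Module.End R M) {y : A} {f : M} (hf : θ y f = 0)

noncomputable def AlgHom.liftQuotSpan : (A ⧸ Ideal.span {y}) →ₗ[R] M :=
  Submodule.liftQ ((Ideal.span {y}).restrictScalars R) (LinearMap.applyₗ f ∘ₗ θ.toLinearMap)
      (fun _ hx => by
        obtain ⟨c, rfl⟩ := Ideal.mem_span_singleton'.mp hx
        simp [hf]) ∘ₗ
    (Submodule.Quotient.restrictScalarsEquiv R _).symm.toLinearMap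

theorem AlgHom.liftQuotSpan_mk (a : A) :
    θ.liftQuotSpan hf (Ideal.Quotient.mk _ a) = θ a f := rfl

theorem AlgHom.liftQuotSpan_smul (b : A) (z : A ⧸ Ideal.span {y}) :
    θ.liftQuotSpan hf (b • z) = θ b (θ.liftQuotSpan hf z) := by
  obtain ⟨a, rfl⟩ := Ideal.Quotient.mk_surjective z
  rw [Algebra.smul_def, Ideal.Quotient.algebraMap_eq, ← map_mul, liftQuotSpan_mk,
    liftQuotSpan_mk, map_mul, Module.End.mul_apply]

end QuotientLift

theorem MonoidAlgebra.aeval_of_sub_one_surjective {R C : Type*} [CommRing R] [Group C] {σ : C}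
    (hfin : IsOfFinOrder σ) (hgen : ∀ c, c ∈ Subgroup.zpowers σ) :
    Function.Surjective (aeval (R := R) (of R C σ - 1)) := by
  rw [← AlgHom.range_eq_top, eq_top_iff]
  rintro a -
  induction a using MonoidAlgebra.induction_on with
  | of c =>
    obtain ⟨n, rfl⟩ := hfin.mem_powers_iff_mem_zpowers.mpr (hgen c)
    exact ⟨(X + 1) ^ n, by simp⟩
  | add a b ha hb => exact add_mem ha hb
  | smul r a ha => exact Subalgebra.smul_mem _ ha r

namespace Jmod

variable {K : Type} [Field K] {C : Type} [CommGroup C] {σ : C}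

noncomputable def ofAdjoinRoot (s : ℕ) : AdjoinRoot (X ^ s : K[X]) →ₐ[K] Jmod K C σ s :=
  AdjoinRoot.liftAlgHom _ (Algebra.ofId K _) (Ideal.Quotient.mk _ (of K C σ - 1)) <| by
    rw [eval₂_X_pow, ← map_pow, Ideal.Quotient.eq_zero_iff_mem]
    exact Ideal.mem_span_singleton_self _

theorem ofAdjoinRoot_surjective (hfin : IsOfFinOrder σ) (hgen : ∀ c, c ∈ Subgroup.zpowers σ)
    (s : ℕ) :
    Function.Surjective (ofAdjoinRoot (K := K) (σ := σ) s) := by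
  intro z
  obtain ⟨a, rfl⟩ := Ideal.Quotient.mk_surjective z
  obtain ⟨P, rfl⟩ := aeval_of_sub_one_surjective hfin hgen a
  refine ⟨AdjoinRoot.mk _ P, ?_⟩
  rw [ofAdjoinRoot, AdjoinRoot.liftAlgHom_mk]
  exact aeval_algHom_apply (Ideal.Quotient.mkₐ K _) _ P

theorem finite (hfin : IsOfFinOrder σ) (hgen : ∀ c, c ∈ Subgroup.zpowers σ) (s : ℕ) :
    Module.Finite K (Jmod K C σ s) :=
  have := (AdjoinRoot.powerBasis (pow_ne_zero s (X_ne_zero (R := K)))).finite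
  Module.Finite.of_surjective (ofAdjoinRoot s).toLinearMap (ofAdjoinRoot_surjective hfin hgen s)

theorem finrank_le (hfin : IsOfFinOrder σ) (hgen : ∀ c, c ∈ Subgroup.zpowers σ) (s : ℕ) :
    finrank K (Jmod K C σ s) ≤ s := by
  let pb := AdjoinRoot.powerBasis (pow_ne_zero s (X_ne_zero (R := K)))
  have := pb.finite
  calc finrank K (Jmod K C σ s) ≤ finrank K (AdjoinRoot (X ^ s : K[X])) :=
        LinearMap.finrank_le_finrank_of_surjective (f := (ofAdjoinRoot s).toLinearMap)
          (ofAdjoinRoot_surjective hfin hgen s)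
    _ = s := by rw [pb.finrank, AdjoinRoot.powerBasis_dim, natDegree_X_pow]

theorem finrank_pi_prod_le (hfin : IsOfFinOrder σ) (hgen : ∀ c, c ∈ Subgroup.zpowers σ)
    (p q r : ℕ) :
    finrank K ((Fin q → Jmod K C σ p) × Jmod K C σ r) ≤ q * p + r := by
  have := finite (K := K) hfin hgen p
  have := finite (K := K) hfin hgen r
  rw [finrank_prod, finrank_pi_fintype, Finset.sum_const, Finset.card_univ, Fintype.card_fin,
    smul_eq_mul]
  exact add_le_add (Nat.mul_le_mul_left q (finrank_le hfin hgen p)) (finrank_le hfin hgen r)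

end Jmod

section Blocks

variable {K : Type} [Field K] {C : Type} [CommGroup C] {σ : C} {p : ℕ} [CharP K p]
  [Fact p.Prime] (hgen : ∀ c, c ∈ Subgroup.zpowers σ) (hσ : p ∣ orderOf σ)

/-- `J_s` is realised as the multiples of `(σ - 1) ^ (p - s)` in `J_p`, so that one generator
serves every `s ≤ p`, including `s = 0`. -/
noncomputable def jmodToPolynomial (s ℓ : ℕ) (hs : s ≤ p) : Jmod K C σ s →ₗ[K] K[X] :=
  (taylorRep K p hgen hσ).asAlgebraHom.liftQuotSpan (y := (of K C σ - 1) ^ s)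
    (f := (taylorRep K p hgen hσ).asAlgebraHom ((of K C σ - 1) ^ (p - s))
      ((X ^ p - X) ^ ℓ * descPochhammer K (p - 1))) <| by
    rw [← Module.End.mul_apply, ← map_mul, ← pow_add, Nat.add_sub_cancel' hs,
      asAlgebraHom_taylorRep_X_pow_sub_X_pow_mul, asAlgebraHom_taylorRep_sub_one_pow,
      pow_taylor_sub_one_apply_eq_zero, mul_zero]
    simpa [Nat.sub_add_cancel (Fact.out : p.Prime).one_le] using
      descPochhammer_mem_degreeLT K (p - 1)

theorem jmodToPolynomial_mem {s ℓ : ℕ} (hs : s ≤ p) (z : Jmod K C σ s) :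
    jmodToPolynomial hgen hσ s ℓ hs z ∈ degreeLT K (ℓ * p + s) := by
  have hp : 1 < p := (Fact.out : p.Prime).one_lt
  obtain ⟨a, rfl⟩ := Ideal.Quotient.mk_surjective z
  refine asAlgebraHom_taylorRep_mem_degreeLT K p hgen hσ a ?_
  rw [asAlgebraHom_taylorRep_X_pow_sub_X_pow_mul, asAlgebraHom_taylorRep_sub_one_pow]
  have hΔ : ((taylor (1 : K) - 1) ^ (p - s)) (descPochhammer K (p - 1)) ∈ degreeLT K s :=
    pow_taylor_sub_one_apply_mem_degreeLT 1 (p - s) <| by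
      simpa [Nat.add_sub_cancel' hs, Nat.sub_add_cancel hp.le] using
        descPochhammer_mem_degreeLT K (p - 1)
  simpa [(monic_X_pow_sub_X K hp).natDegree_pow, natDegree_X_pow_sub_X K hp] using
    ((monic_X_pow_sub_X K hp).pow ℓ).mul_mem_degreeLT hΔ

theorem jmodToPolynomial_mk_pow {s ℓ i : ℕ} (hs : s ≤ p) (hi : i < s) :
    jmodToPolynomial hgen hσ s ℓ hs (Ideal.Quotient.mk _ ((of K C σ - 1) ^ (s - 1 - i))) =
      ((p - 1).descFactorial (p - 1 - i) : K) • ((X ^ p - X) ^ ℓ * descPochhammer K i) := by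
  obtain ⟨t, ht⟩ : ∃ t, p - 1 = i + t := ⟨p - 1 - i, by omega⟩
  rw [jmodToPolynomial, AlgHom.liftQuotSpan_mk, ← Module.End.mul_apply, ← map_mul, ← pow_add,
    asAlgebraHom_taylorRep_X_pow_sub_X_pow_mul, asAlgebraHom_taylorRep_sub_one_pow,
    show s - 1 - i + (p - s) = t by omega, ht, pow_taylor_one_sub_one_descPochhammer,
    show i + t - i = t by omega, mul_smul_comm]

noncomputable def jmodSumToPolynomial (q r : ℕ) (hr : r ≤ p) :
    ((Fin q → Jmod K C σ p) × Jmod K C σ r) →ₗ[K] K[X] :=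
  (LinearMap.lsum K (fun _ : Fin q ↦ Jmod K C σ p) K
      fun j ↦ jmodToPolynomial hgen hσ p j le_rfl).coprod
    (jmodToPolynomial hgen hσ r q hr)

theorem jmodSumToPolynomial_apply {q r : ℕ} (hr : r ≤ p)
    (x : (Fin q → Jmod K C σ p) × Jmod K C σ r) :
    jmodSumToPolynomial hgen hσ q r hr x =
      ∑ j : Fin q, jmodToPolynomial hgen hσ p j le_rfl (x.1 j) +
        jmodToPolynomial hgen hσ r q hr x.2 := by
  simp [jmodSumToPolynomial]

theorem jmodSumToPolynomial_mem {m q r : ℕ} (hr : r ≤ p) (hqr : m = q * p + r)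
    (x : (Fin q → Jmod K C σ p) × Jmod K C σ r) :
    jmodSumToPolynomial hgen hσ q r hr x ∈ degreeLT K m := by
  rw [jmodSumToPolynomial_apply]
  refine add_mem (Submodule.sum_mem _ fun j _ ↦ degreeLT_mono ?_
    (jmodToPolynomial_mem hgen hσ le_rfl _)) (degreeLT_mono (by omega)
    (jmodToPolynomial_mem hgen hσ hr _))
  have := Nat.mul_le_mul_right p j.isLt
  rw [Nat.succ_mul] at this
  omega

theorem jmodSumToPolynomial_smul {q r : ℕ} (hr : r ≤ p) (b : MonoidAlgebra K C)
    (x : (Fin q → Jmod K C σ p) × Jmod K C σ r) :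
    jmodSumToPolynomial hgen hσ q r hr (b • x) =
      (taylorRep K p hgen hσ).asAlgebraHom b (jmodSumToPolynomial hgen hσ q r hr x) := by
  simp only [jmodSumToPolynomial_apply, map_add, map_sum, Prod.smul_fst, Prod.smul_snd,
    Pi.smul_apply, jmodToPolynomial, AlgHom.liftQuotSpan_smul]

theorem X_pow_sub_X_pow_mul_descPochhammer_mem_range_jmodSumToPolynomial {q r ℓ i : ℕ}
    (hr : r < p) (hi : i < p) (hℓ : ℓ < q ∨ ℓ = q ∧ i < r) :
    (X ^ p - X) ^ ℓ * descPochhammer K i ∈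
      LinearMap.range (jmodSumToPolynomial hgen hσ q r hr.le) := by
  have hp : p.Prime := Fact.out
  rw [← Submodule.smul_mem_iff _ (Nat.cast_descFactorial_ne_zero K (p := p)
    (Nat.sub_lt hp.pos one_pos) (Nat.sub_le _ i))]
  rcases hℓ with hℓ | ⟨rfl, hir⟩
  · refine ⟨(Pi.single ⟨ℓ, hℓ⟩ (Ideal.Quotient.mk _ ((of K C σ - 1) ^ (p - 1 - i))), 0), ?_⟩
    rw [jmodSumToPolynomial_apply,
      Finset.sum_eq_single ⟨ℓ, hℓ⟩ (fun j _ hj ↦ by simp [hj]) (by simp)]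
    simpa using jmodToPolynomial_mk_pow hgen hσ le_rfl hi
  · refine ⟨(0, Ideal.Quotient.mk _ ((of K C σ - 1) ^ (r - 1 - i))), ?_⟩
    simpa [jmodSumToPolynomial_apply] using jmodToPolynomial_mk_pow hgen hσ hr.le hir

theorem degreeLT_le_range_jmodSumToPolynomial {m q r : ℕ} (hr : r < p) (hqr : m = q * p + r) :
    degreeLT K m ≤ LinearMap.range (jmodSumToPolynomial hgen hσ q r hr.le) := by
  have hp : p.Prime := Fact.out
  rw [← (artinSchreierPochhammer K hp.one_lt).span_degreeLT fun i _ ↦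
      (monic_X_pow_sub_X_pow_mul_descPochhammer K hp.one_lt _ _).leadingCoeff ▸ isUnit_one,
    Submodule.span_le]
  rintro _ ⟨d, hd, rfl⟩
  rw [Set.mem_Iio] at hd
  rw [artinSchreierPochhammer_apply]
  rcases lt_or_ge d (q * p) with hdq | hdq
  · exact X_pow_sub_X_pow_mul_descPochhammer_mem_range_jmodSumToPolynomial hgen hσ hr
      (Nat.mod_lt _ hp.pos) (.inl ((Nat.div_lt_iff_lt_mul hp.pos).mpr hdq))
  · obtain ⟨i, rfl⟩ := Nat.exists_eq_add_of_le hdq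
    have hi : i < r := by omega
    rw [Nat.mul_comm, Nat.mul_add_div hp.pos, Nat.mul_add_mod,
      Nat.div_eq_of_lt (hi.trans hr), Nat.mod_eq_of_lt (hi.trans hr), add_zero]
    exact X_pow_sub_X_pow_mul_descPochhammer_mem_range_jmodSumToPolynomial hgen hσ hr
      (hi.trans hr) (.inr ⟨rfl, hi⟩)

end Blocks

theorem polynomials_degreeLT_module_structure_general
    (p : ℕ) (hp : p.Prime)
    (K : Type) [Field K] [CharP K p]
    (C : Type) [CommGroup C] (σ : C) (hσ : orderOf σ = p)
    (hgen : ∀ c : C, c ∈ Subgroup.zpowers σ)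
    (m q r : ℕ) (hr : r < p) (hqr : m = q * p + r) :
    ∃ e : ((Fin q → Jmod K C σ p) × Jmod K C σ r) ≃ₗ[K] (Polynomial.degreeLT K m),
      ∀ x : (Fin q → Jmod K C σ p) × Jmod K C σ r,
        ((e (MonoidAlgebra.of K C σ • x) : K[X])) = Polynomial.taylor 1 (e x : K[X]) := by
  have : Fact p.Prime := ⟨hp⟩
  have hfin : IsOfFinOrder σ := orderOf_pos_iff.mp (hσ ▸ hp.pos)
  have := Jmod.finite (K := K) hfin hgen p
  have := Jmod.finite (K := K) hfin hgen r
  have hσp : p ∣ orderOf σ := hσ.symm.dvd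
  let E := (jmodSumToPolynomial (K := K) hgen hσp q r hr.le).codRestrict _
    (jmodSumToPolynomial_mem hgen hσp hr.le hqr)
  have hsurj : Function.Surjective E := fun v ↦ by
    obtain ⟨x, hx⟩ := degreeLT_le_range_jmodSumToPolynomial hgen hσp hr hqr v.2
    exact ⟨x, Subtype.ext hx⟩
  have hdim : finrank K ((Fin q → Jmod K C σ p) × Jmod K C σ r) ≤ finrank K (degreeLT K m) := by
    rw [finrank_eq_card_basis (degreeLT.basis K m), Fintype.card_fin, hqr]
    exact Jmod.finrank_pi_prod_le hfin hgen p q r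
  refine ⟨.ofBijective E (OrzechProperty.bijective_of_surjective_of_finrank_le E hsurj hdim),
    fun x ↦ ?_⟩
  rw [LinearEquiv.ofBijective_apply, LinearEquiv.ofBijective_apply, LinearMap.codRestrict_apply,
    LinearMap.codRestrict_apply, jmodSumToPolynomial_smul, Representation.asAlgebraHom_of,
    taylorRep_gen]

/-- Let `K` have characteristic `p`, let `m = qp + r` with `0 ≤ r < p`,
and let the cyclic group `C = ⟨σ⟩` of order `p` act on the space `V_m` of polynomials of
degree `< m` by `σ·F(T) = F(T+1)`.  Then `V_m ≅ J_p^q ⊕ J_r` as `K[C]`-modules. -/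
theorem polynomials_degreeLT_module_structure
    (p : ℕ) (hp : p.Prime)
    (K : Type) [Field K] [CharP K p]
    (C : Type) [CommGroup C] (σ : C) (hσ : orderOf σ = p)
    (hgen : ∀ c : C, c ∈ Subgroup.zpowers σ)
    (m q r : ℕ) (hm : 1 ≤ m) (hr : r < p) (hqr : m = q * p + r) :
    ∃ e : ((Fin q → Jmod K C σ p) × Jmod K C σ r) ≃ₗ[K] (Polynomial.degreeLT K m),
      ∀ x : (Fin q → Jmod K C σ p) × Jmod K C σ r,
        ((e (MonoidAlgebra.of K C σ • x) : K[X])) = Polynomial.taylor 1 (e x : K[X]) :=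
  polynomials_degreeLT_module_structure_general p hp K C σ hσ hgen m q r hr hqr
end

section
/- Let p be a prime, K a field of characteristic p, and A a cyclic group of order p. For every integer n ≥ 1, the free module K[A]^n does not contain an internal direct sum of n+1 nonzero K[A]-submodules: if M_1, …, M_{n+1} are K[A]-submodules of K[A]^n whose sum is direct, then at least one M_i is zero. In particular (n = 1), K[A] does not contain the direct sum of two nonzero K[A]-submodules. -/
/-!
Let `g` generate `A` and put `x = g - 1 ∈ K[A]`. In characteristic `p`, `x ^ p = g ^ p - 1 = 0`,
so every nonzero submodule of `K[A]^n` contains a nonzero vector killed by `x`. The coordinates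
of such a vector are `g`-invariant, hence have constant coefficients, so these vectors form a
`K`-space on which "coefficient at `1`" is injective: it has dimension at most `n`. Nonzero
vectors taken from independent submodules are `K`-linearly independent, so there are at most
`n` of them.
-/

open MonoidAlgebra

theorem isNilpotent_sub_one_of_pow_eq_one_s13 {R : Type*} [Ring R] (p : ℕ) [ExpChar R p]
    {u : R} (hu : u ^ p = 1) : IsNilpotent (u - 1) :=
  ⟨p, by rw [sub_pow_expChar_of_commute p (Commute.one_right u), hu, one_pow, sub_self]⟩

theorem Submodule.exists_mem_ne_zero_smul_eq_zero {R M : Type*} [Semiring R] [AddCommMonoid M]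
    [Module R M] {x : R} (hx : IsNilpotent x) {N : Submodule R M} (hN : N ≠ ⊥) :
    ∃ v ∈ N, v ≠ 0 ∧ x • v = 0 := by
  obtain ⟨m, hmN, hm⟩ := N.exists_mem_ne_zero_of_ne_bot hN
  obtain ⟨k, hk, hk1⟩ :=
    Nat.exists_not_and_succ_of_not_zero_of_exists (p := fun k => x ^ k • m = 0)
      (by rwa [pow_zero, one_smul]) (hx.imp fun k hk => by rw [hk, zero_smul])
  exact ⟨x ^ k • m, N.smul_mem _ hmN, hk, by rwa [smul_smul, ← pow_succ']⟩

theorem iSupIndep.restrictScalars {R M ι : Type*} (S : Type*) [Semiring S] [Semiring R]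
    [AddCommMonoid M] [Module S M] [Module R M] [SMul S R] [IsScalarTower S R M]
    {N : ι → Submodule R M} (hN : iSupIndep N) :
    iSupIndep fun i => (N i).restrictScalars S := by
  intro i
  simp only [← Submodule.restrictScalars_iSup]
  rw [disjoint_iff, ← Submodule.restrictScalars_inf, Submodule.restrictScalars_eq_bot_iff,
    ← disjoint_iff]
  exact hN i

namespace MonoidAlgebra

variable {k G : Type*} [Group G] {g : G}

theorem coeff_eq_coeff_one_of_of_mul_eq [Semiring k] (hg : ∀ a, a ∈ Subgroup.zpowers g)
    {y : k[G]} (hy : of k G g * y = y) (a : G) : y.coeff a = y.coeff 1 := by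
  have hshift (b : G) : y.coeff (g⁻¹ * b) = y.coeff b := by
    simpa using congr_arg (·.coeff b) hy
  have hzpow (m : ℤ) : y.coeff (g ^ m) = y.coeff 1 := by
    induction m using Int.induction_on with
    | zero => simp
    | succ m ih => rw [← ih, ← hshift (g ^ ((m : ℤ) + 1))]; congr 1; group
    | pred m ih => rw [← ih, ← hshift (g ^ (-(m : ℤ)))]; congr 1; group
  obtain ⟨m, rfl⟩ := hg a
  exact hzpow m

theorem eq_zero_of_sub_one_mul_eq_zero [Ring k] (hg : ∀ a, a ∈ Subgroup.zpowers g) {y : k[G]}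
    (hy : (of k G g - 1) * y = 0) (hy1 : y.coeff 1 = 0) : y = 0 := by
  rw [sub_mul, one_mul, sub_eq_zero] at hy
  ext a
  rw [coeff_eq_coeff_one_of_of_mul_eq hg hy, hy1, coeff_zero, Finsupp.coe_zero, Pi.zero_apply]

theorem card_le_of_linearIndependent_of_smulSubOne_eq_zero [Field k]
    (hg : ∀ a, a ∈ Subgroup.zpowers g) {ι ι' : Type*} [Fintype ι] [Fintype ι']
    {v : ι' → ι → k[G]} (hv : LinearIndependent k v)
    (hvx : ∀ j, (of k G g - 1) • v j = 0) :
    Fintype.card ι' ≤ Fintype.card ι := by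
  let coeffOne : (ι → k[G]) →ₗ[k] (ι → k) :=
    LinearMap.compLeft (Finsupp.lapply 1 ∘ₗ (coeffLinearEquiv k).toLinearMap) ι
  let smulSubOne := DistribSMul.toLinearMap k (ι → k[G]) (of k G g - 1)
  have hdisj : Disjoint (LinearMap.ker smulSubOne) (LinearMap.ker coeffOne) := by
    refine Submodule.disjoint_def.2 fun w hw hw1 => funext fun i => ?_
    exact eq_zero_of_sub_one_mul_eq_zero hg (congr_fun hw i) (congr_fun hw1 i)
  have hspan : Submodule.span k (Set.range v) ≤ LinearMap.ker smulSubOne :=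
    Submodule.span_le.2 (Set.range_subset_iff.2 hvx)
  simpa using (hv.map (hdisj.mono_left hspan)).fintype_card_le_finrank

end MonoidAlgebra

theorem no_direct_sum_of_succ_nonzero_submodules_general
    (p : ℕ) (hp : p.Prime)
    (K : Type) [Field K] [CharP K p]
    (A : Type) [Group A] [IsCyclic A] (hA : Nat.card A = p)
    (n : ℕ)
    (M : Fin (n + 1) → Submodule (MonoidAlgebra K A) (Fin n → MonoidAlgebra K A))
    (hindep : iSupIndep M) :
    ∃ i, M i = ⊥ := by
  by_contra! hM
  have : Fact p.Prime := ⟨hp⟩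
  have : CharP K[A] p := charP_of_injective_algebraMap (algebraMap K K[A]).injective p
  obtain ⟨g, hg⟩ := IsCyclic.exists_generator (α := A)
  have hgp : of K A g ^ p = 1 := by rw [← map_pow, ← hA, pow_card_eq_one', map_one]
  choose v hvM hv0 hvx using fun i =>
    (M i).exists_mem_ne_zero_smul_eq_zero (isNilpotent_sub_one_of_pow_eq_one_s13 p hgp) (hM i)
  have hv : LinearIndependent K v := (hindep.restrictScalars K).linearIndependent _ hvM hv0
  simpa using card_le_of_linearIndependent_of_smulSubOne_eq_zero hg hv hvx

/-- Let `K` be a field of characteristic `p` and `A` a cyclic group of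
order `p`.  For every `n ≥ 1`, the free module `K[A]^n` does not contain an internal
direct sum of `n+1` nonzero `K[A]`-submodules. -/
theorem no_direct_sum_of_succ_nonzero_submodules
    (p : ℕ) (hp : p.Prime)
    (K : Type) [Field K] [CharP K p]
    (A : Type) [Group A] [IsCyclic A] (hA : Nat.card A = p)
    (n : ℕ) (hn : 1 ≤ n)
    (M : Fin (n + 1) → Submodule (MonoidAlgebra K A) (Fin n → MonoidAlgebra K A))
    (hindep : iSupIndep M) :
    ∃ i, M i = ⊥ :=
  no_direct_sum_of_succ_nonzero_submodules_general p hp K A hA n M hindep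
end
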